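/- arXiv:2508.10969 — 4 statements merged into one kernel-verified Lean document; each statement's English description precedes it below -/
import Mathlib

section
/- Let T be a standard Young tableau of shape λ with n boxes and let i ≥ 1. Then j ∈ {1,…,n} is a nonexcedance of prom_i(T) (i.e., there is no edge α → j with α < j) if and only if j lies in the first i rows of T. Consequently, a standard Young tableau of arbitrary shape is uniquely determined by its tuple of promotion digraphs. -/
open Classical

/-- A cell `(row, col)` (0-indexed) of a Young diagram. -/
abbrev Cell : Type := ℕ × ℕ

/-- The cell `c` lies in the Young diagram of the shape `lam`. -/
def inShape (lam : List ℕ) (c : Cell) : Prop := c.2 < lam.getD c.1 0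

/-- `lam` is an integer partition (weakly decreasing list of positive parts). -/
def IsPartition (lam : List ℕ) : Prop :=
  lam.Pairwise (· ≥ ·) ∧ ∀ x ∈ lam, 0 < x

/-- An increasing tableau of shape `lam` with entries in `{1,…,q}`
(rows and columns strictly increase); cells outside the shape carry `0`. -/
structure IncTab (lam : List ℕ) (q : ℕ) where
  entry : Cell → ℕ
  entry_pos : ∀ c, inShape lam c → 1 ≤ entry c
  entry_le : ∀ c, inShape lam c → entry c ≤ q
  row_strict : ∀ i j : ℕ, inShape lam (i, j + 1) → entry (i, j) < entry (i, j + 1)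
  col_strict : ∀ i j : ℕ, inShape lam (i + 1, j) → entry (i, j) < entry (i + 1, j)
  zero_outside : ∀ c, ¬ inShape lam c → entry c = 0

/-- A standard Young tableau: a bijective filling by `1, …, n` where `n = |lam|`. -/
def IsStandard (lam : List ℕ) (n : ℕ) (T : IncTab lam n) : Prop :=
  n = lam.sum ∧ ∀ v, 1 ≤ v → v ≤ n → ∃! c, inShape lam c ∧ T.entry c = v

/-- Every value of `{1,…,q}` appears in the tableau. -/
def Packed (lam : List ℕ) (q : ℕ) (T : IncTab lam q) : Prop :=
  ∀ v, 1 ≤ v → v ≤ q → ∃ c : Cell, inShape lam c ∧ T.entry c = v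

/-- During (K-)gromotion, a vacated box is recorded by the value `0` (a "bullet"). -/
def isBullet (lam : List ℕ) (f : Cell → ℕ) (c : Cell) : Prop :=
  inShape lam c ∧ f c = 0

/-- `c` carries value `v` and is adjacent (on its left or above) to a bullet box. -/
def inC (lam : List ℕ) (f : Cell → ℕ) (v : ℕ) (c : Cell) : Prop :=
  inShape lam c ∧ f c = v ∧
    ((1 ≤ c.2 ∧ isBullet lam f (c.1, c.2 - 1)) ∨ (1 ≤ c.1 ∧ isBullet lam f (c.1 - 1, c.2)))

/-- One K-jeu-de-taquin substep: simultaneously all boxes with value `v` adjacent to a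
bullet become bullets, and the bullets adjacent to them receive value `v`. -/
noncomputable def substep (lam : List ℕ) (v : ℕ) (f : Cell → ℕ) : Cell → ℕ :=
  fun c =>
    if inC lam f v c then 0
    else if isBullet lam f c ∧ (inC lam f v (c.1, c.2 + 1) ∨ inC lam f v (c.1 + 1, c.2)) then v
    else f c

/-- The `j`-th value of the cyclically shifted alphabet `(α < α+1 < … < q < 1 < … < α-1)`. -/
def cyc (q α j : ℕ) : ℕ := (α - 1 + j) % q + 1

/-- State of the gromotion slide (at stage `α` of the alphabet cycle) after `j` substeps;
the base case deletes the minimal letter `α` from the upper-left corner. -/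
noncomputable def iterSub (lam : List ℕ) (q α : ℕ) (f : Cell → ℕ) : ℕ → Cell → ℕ
  | 0 => fun c => if c = ((0, 0) : Cell) ∧ f c = α then 0 else f c
  | j + 1 => substep lam (cyc q α (j + 1)) (iterSub lam q α f j)

/-- One application of (K-)gromotion at stage `α`: slide, then fill the vacated boxes
with the removed letter `α` (now maximal in the cycled alphabet). -/
noncomputable def gromote (lam : List ℕ) (q α : ℕ) (f : Cell → ℕ) : Cell → ℕ :=
  fun c =>
    if inShape lam c ∧ iterSub lam q α f (q - 1) c = 0 then α
    else iterSub lam q α f (q - 1) c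

/-- The `k`-th iterate of (K-)gromotion (stages cycle through `1, …, q`). -/
noncomputable def gromIter (lam : List ℕ) (q : ℕ) (f : Cell → ℕ) : ℕ → Cell → ℕ
  | 0 => f
  | k + 1 => gromote lam q (k % q + 1) (gromIter lam q f k)

/-- In state `f`, the value `v` is about to move from row `i+1` to row `i` (1-indexed):
a bullet in (1-indexed) row `i` has the box below it about to slide up with value `v`. -/
def moveAt (lam : List ℕ) (f : Cell → ℕ) (v i : ℕ) : Prop :=
  ∃ c : Cell, isBullet lam f c ∧ c.1 + 1 = i ∧ inC lam f v (c.1 + 1, c.2)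

/-- Edge `α → β` of the `i`-th promotion digraph `prom_i(T)`:
during the `α`-th application of (K-)gromotion, value `β` moves from row `i+1` to row `i`. -/
def promEdge (lam : List ℕ) (q i : ℕ) (T : IncTab lam q) (α β : ℕ) : Prop :=
  1 ≤ α ∧ α ≤ q ∧
  ∃ j : ℕ, j + 1 ≤ q - 1 ∧ cyc q α (j + 1) = β ∧
    moveAt lam (iterSub lam q α (gromIter lam q T.entry (α - 1)) j) β i

/-- (K-)promotion: gromotion at stage `1` followed by the relabeling `v ↦ v - 1`,
with the removed letter (temporarily `1`) becoming `q`. -/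
noncomputable def kpromote (lam : List ℕ) (q : ℕ) (f : Cell → ℕ) : Cell → ℕ :=
  fun c =>
    if inShape lam c then
      (if gromote lam q 1 f c = 1 then q else gromote lam q 1 f c - 1)
    else 0

/-- Value `v` appears in (1-indexed) row `r` of the filling `f`. -/
def appearsRow (lam : List ℕ) (f : Cell → ℕ) (r v : ℕ) : Prop :=
  1 ≤ r ∧ ∃ j : ℕ, inShape lam (r - 1, j) ∧ f (r - 1, j) = v

/-- The letter of the lattice word at position `v`: the set of (1-indexed) rows
containing value `v`. -/
def rowSetW (lam : List ℕ) (f : Cell → ℕ) (v : ℕ) : Set ℕ :=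
  {r | appearsRow lam f r v}

/-- For a standard filling: the (1-indexed) row containing value `v`. -/
noncomputable def latticeRow (lam : List ℕ) (f : Cell → ℕ) (v : ℕ) : ℕ :=
  sInf {r | appearsRow lam f r v}

/-- Number of occurrences of letter `r` among the first `j` letters of the lattice word:
the number of values `v ≤ j` appearing in row `r`. -/
noncomputable def cnt (lam : List ℕ) (f : Cell → ℕ) (r j : ℕ) : ℕ :=
  ((Finset.Icc 1 j).filter fun v => appearsRow lam f r v).card

/-- `j` is a (1-)balance point of the lattice word of a two-row filling. -/
def isBalance (lam : List ℕ) (f : Cell → ℕ) (j : ℕ) : Prop :=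
  cnt lam f 1 j = cnt lam f 2 j

/-- `j` is a (1-)teetering point of the lattice word of a two-row filling. -/
def isTeeter (lam : List ℕ) (f : Cell → ℕ) (j : ℕ) : Prop :=
  appearsRow lam f 1 j ∧ appearsRow lam f 2 j ∧ cnt lam f 1 j = cnt lam f 2 j + 1

/-- A noncrossing perfect matching of `{1,…,n}`, as a symmetric relation. -/
def IsNCMatching (n : ℕ) (M : ℕ → ℕ → Prop) : Prop :=
  (∀ a b, M a b → 1 ≤ a ∧ a ≤ n ∧ 1 ≤ b ∧ b ≤ n ∧ a ≠ b) ∧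
  (∀ a b, M a b → M b a) ∧
  (∀ a, 1 ≤ a → a ≤ n → ∃! b, M a b) ∧
  (∀ a b x y, M a x → M b y → ¬ (a < b ∧ b < x ∧ x < y))

/-- Number of occurrences of letter `r` among positions `a, …, b` of the lattice word
of a standard two-row filling. -/
noncomputable def letterCnt (lam : List ℕ) (f : Cell → ℕ) (r a b : ℕ) : ℕ :=
  ((Finset.Icc a b).filter fun p => latticeRow lam f p = r).card

/-- Positions `a < b` are matched in the noncrossing matching of the lattice word:
`w_a = 1`, `w_b = 2`, the interval `[a,b]` is balanced, and every proper prefix of it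
has strictly more `1`s than `2`s (i.e. `b` is the nearest available `2` for `a`). -/
def matchRel (lam : List ℕ) (f : Cell → ℕ) (a b : ℕ) : Prop :=
  a < b ∧ latticeRow lam f a = 1 ∧ latticeRow lam f b = 2 ∧
  letterCnt lam f 1 a b = letterCnt lam f 2 a b ∧
  ∀ m, a ≤ m → m < b → letterCnt lam f 2 a m < letterCnt lam f 1 a m

/-- The (symmetrized) noncrossing matching associated to a two-row standard filling. -/
def symMatch (lam : List ℕ) (f : Cell → ℕ) (a b : ℕ) : Prop :=
  matchRel lam f a b ∨ matchRel lam f b a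

/-- A noncrossing set partition of `{1,…,q}`, encoded by its "same block" relation. -/
def IsNCPartition (q : ℕ) (R : ℕ → ℕ → Prop) : Prop :=
  (∀ a b, R a b → 1 ≤ a ∧ a ≤ q ∧ 1 ≤ b ∧ b ≤ q) ∧
  (∀ a, 1 ≤ a → a ≤ q → R a a) ∧
  (∀ a b, R a b → R b a) ∧
  (∀ a b c, R a b → R b c → R a c) ∧
  (∀ a b x y, a < x → x < b → b < y → R a b → R x y → R a x)

/-- The defining compatibility between a two-row increasing tableau (given by its
filling `f`) and its noncrossing set partition `R` (Pechenik): singleton blocks are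
the absent values; least elements of nontrivial blocks are the values appearing only
in the top row; greatest elements are the values appearing only in the bottom row;
middle elements are the values appearing in both rows. -/
def BlockCompat (lam : List ℕ) (q : ℕ) (f : Cell → ℕ) (R : ℕ → ℕ → Prop) : Prop :=
  ∀ v, 1 ≤ v → v ≤ q →
    ((∀ u, R v u → u = v) ↔ ¬ ∃ c : Cell, inShape lam c ∧ f c = v) ∧
    (((∃ u, R v u ∧ v < u) ∧ ∀ u, R v u → v ≤ u) ↔
      (appearsRow lam f 1 v ∧ ¬ appearsRow lam f 2 v)) ∧
    (((∃ u, R v u ∧ u < v) ∧ ∀ u, R v u → u ≤ v) ↔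
      (appearsRow lam f 2 v ∧ ¬ appearsRow lam f 1 v)) ∧
    (((∃ u, R v u ∧ u < v) ∧ (∃ u, R v u ∧ v < u)) ↔
      (appearsRow lam f 1 v ∧ appearsRow lam f 2 v))

/-!
After `β - 1` gromotions the entry `β` of a standard tableau sits in the upper-left corner.
During one slide every other entry moves at most once, one box up or left, so its row never
increases, and a move from row `i + 1` to row `i` during the `α`-th gromotion is exactly an edge
`α → β` of `prom_i(T)`. Hence `β` receives an edge from some `α < β` in `prom_i(T)` iff it
starts strictly below row `i`. So the digraphs determine the row of every entry, hence the shape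
and, rows being increasing, the tableau.

What controls the slides is that the filling at stage `α` is standard for the alphabet cycled to
start at `α` (`IsCycStandard`), and that after `j` substeps of the slide the entries above and
left of the vacated box come among the first `j + 1` letters of that alphabet, those below and
right of it after them (`SlideInv`).
-/

namespace Gromotion

section CyclicOrder

variable {n α v w : ℕ}

/-- The position of `v` in the alphabet `α < α+1 < … < n < 1 < … < α-1`, counted from `0`:
the inverse of `cyc n α`. -/
def cycOrd (n α v : ℕ) : ℕ := (v + n - α) % n

lemma cycOrd_eq (hα : 1 ≤ α) (hαn : α ≤ n) (hv : 1 ≤ v) (hvn : v ≤ n) :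
    cycOrd n α v = if α ≤ v then v - α else v + n - α := by
  unfold cycOrd
  split_ifs
  · rw [show v + n - α = v - α + n by omega, Nat.add_mod_right, Nat.mod_eq_of_lt (by omega)]
  · exact Nat.mod_eq_of_lt (by omega)

lemma cycOrd_lt (hα : 1 ≤ α) (hαn : α ≤ n) (hv : 1 ≤ v) (hvn : v ≤ n) :
    cycOrd n α v < n := by
  rw [cycOrd_eq hα hαn hv hvn]; split_ifs <;> omega

lemma cycOrd_self (hα : 1 ≤ α) (hαn : α ≤ n) : cycOrd n α α = 0 := by
  simp [cycOrd_eq hα hαn hα hαn]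

lemma cycOrd_injective (hα : 1 ≤ α) (hαn : α ≤ n) (hv : 1 ≤ v) (hvn : v ≤ n)
    (hw : 1 ≤ w) (hwn : w ≤ n) (h : cycOrd n α v = cycOrd n α w) : v = w := by
  rw [cycOrd_eq hα hαn hv hvn, cycOrd_eq hα hαn hw hwn] at h
  split_ifs at h <;> omega

lemma cycOrd_pos (hα : 1 ≤ α) (hαn : α ≤ n) (hv : 1 ≤ v) (hvn : v ≤ n) (h : v ≠ α) :
    0 < cycOrd n α v := by
  rw [cycOrd_eq hα hαn hv hvn]; split_ifs <;> omega

lemma cycOrd_cyc {j : ℕ} (hα : 1 ≤ α) (hαn : α ≤ n) (hj : j < n) :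
    cycOrd n α (cyc n α j) = j := by
  unfold cycOrd cyc
  rw [show (α - 1 + j) % n + 1 + n - α = (α - 1 + j) % n + (1 + n - α) by
      have := Nat.mod_lt (α - 1 + j) (by omega : 0 < n); omega,
    Nat.mod_add_mod, show α - 1 + j + (1 + n - α) = j + n by omega, Nat.add_mod_right,
    Nat.mod_eq_of_lt hj]

lemma cyc_cycOrd (hα : 1 ≤ α) (hαn : α ≤ n) (hv : 1 ≤ v) (hvn : v ≤ n) :
    cyc n α (cycOrd n α v) = v := by
  unfold cyc
  rw [cycOrd_eq hα hαn hv hvn]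
  split_ifs
  · rw [show α - 1 + (v - α) = v - 1 by omega, Nat.mod_eq_of_lt (by omega)]; omega
  · rw [show α - 1 + (v + n - α) = v - 1 + n by omega, Nat.add_mod_right,
      Nat.mod_eq_of_lt (by omega)]; omega

lemma cycOrd_succ (hα : 1 ≤ α) (hαn : α ≤ n) (hv : 1 ≤ v) (hvn : v ≤ n) :
    cycOrd n (α % n + 1) v = if v = α then n - 1 else cycOrd n α v - 1 := by
  obtain hlt | rfl := hαn.lt_or_eq
  · rw [Nat.mod_eq_of_lt hlt, cycOrd_eq (by omega) hlt hv hvn, cycOrd_eq hα hαn hv hvn]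
    split_ifs <;> omega
  · rw [Nat.mod_self, cycOrd_eq le_rfl (by omega) hv hvn, cycOrd_eq hα le_rfl hv hvn]
    split_ifs <;> omega

end CyclicOrder

section Shape

variable {lam : List ℕ}

lemma cell_covBy_iff {c d : Cell} : c ⋖ d ↔ d = (c.1, c.2 + 1) ∨ d = (c.1 + 1, c.2) := by
  obtain ⟨c1, c2⟩ := c; obtain ⟨d1, d2⟩ := d
  simp only [Prod.covBy_iff, Nat.covBy_iff_add_one_eq, Prod.mk.injEq]
  omega

lemma getD_antitone (hlam : IsPartition lam) : Antitone fun r => lam.getD r 0 := by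
  intro r r' h
  dsimp only
  rcases lt_or_ge r' lam.length with h' | h'
  · rw [List.getD_eq_getElem _ _ h', List.getD_eq_getElem _ _ (by omega)]
    rcases h.eq_or_lt with rfl | hlt
    · exact le_rfl
    · exact List.pairwise_iff_get.mp hlam.1 ⟨r, by omega⟩ ⟨r', h'⟩ hlt
  · exact (List.getD_eq_default _ _ h').trans_le (Nat.zero_le _)

lemma inShape_of_le (hlam : IsPartition lam) {c d : Cell} (hd : inShape lam d) (h : c ≤ d) :
    inShape lam c :=
  calc c.2 ≤ d.2 := h.2
    _ < lam.getD d.1 0 := hd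
    _ ≤ lam.getD c.1 0 := getD_antitone hlam h.1

lemma inShape_swap {b c d : Cell} (hb : inShape lam b) (hc : inShape lam c) :
    inShape lam (Equiv.swap b c d) ↔ inShape lam d := by
  rcases eq_or_ne d b with rfl | hdb
  · simp [hb, hc]
  rcases eq_or_ne d c with rfl | hdc
  · simp [hb, hc]
  rw [Equiv.swap_apply_of_ne_of_ne hdb hdc]

end Shape

section Substep

variable {lam : List ℕ} {f : Cell → ℕ} {v : ℕ}

lemma inC_iff {c : Cell} :
    inC lam f v c ↔ inShape lam c ∧ f c = v ∧ ∃ p, p ⋖ c ∧ isBullet lam f p := by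
  obtain ⟨c1, c2⟩ := c
  simp only [inC, cell_covBy_iff, Prod.mk.injEq]
  constructor
  · rintro ⟨hc, hv, ⟨h1, hp⟩ | ⟨h1, hp⟩⟩
    · exact ⟨hc, hv, _, Or.inl ⟨rfl, by simp only; omega⟩, hp⟩
    · exact ⟨hc, hv, _, Or.inr ⟨by simp only; omega, rfl⟩, hp⟩
  · rintro ⟨hc, hv, ⟨p1, p2⟩, ⟨rfl, rfl⟩ | ⟨rfl, rfl⟩, hp⟩
    · exact ⟨hc, hv, Or.inl ⟨by simp, by simpa using hp⟩⟩
    · exact ⟨hc, hv, Or.inr ⟨by simp, by simpa using hp⟩⟩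

lemma substep_apply_of_ne {c : Cell} (h0 : f c ≠ 0) (hv : f c ≠ v) :
    substep lam v f c = f c := by
  simp [substep, inC, isBullet, h0, hv]

lemma substep_apply_bullet {b c : Cell} (hb : isBullet lam f b) (hbc : b ⋖ c)
    (hc : inShape lam c) (hv : f c = v) (hv0 : v ≠ 0) : substep lam v f b = v := by
  have hC : inC lam f v c := inC_iff.2 ⟨hc, hv, b, hbc, hb⟩
  have hnC : ¬ inC lam f v b := fun h => hv0 (h.2.1.symm.trans hb.2)
  have hnext : inC lam f v (b.1, b.2 + 1) ∨ inC lam f v (b.1 + 1, b.2) := by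
    rcases cell_covBy_iff.1 hbc with rfl | rfl <;> simp [hC]
  rw [substep, if_neg hnC, if_pos ⟨hb, hnext⟩]

lemma moveAt_of_covBy {b c : Cell} (hb : isBullet lam f b) (hbc : b ⋖ c) (hrow : b.1 < c.1)
    (hc : inShape lam c) (hv : f c = v) : moveAt lam f v c.1 := by
  rcases cell_covBy_iff.1 hbc with rfl | rfl
  · simp at hrow
  · exact ⟨b, hb, rfl, inC_iff.2 ⟨hc, hv, b, hbc, hb⟩⟩

variable {q α : ℕ}

lemma iterSub_zero_apply {c : Cell} (h : f c ≠ α) : iterSub lam q α f 0 c = f c := by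
  simp [iterSub, h]

lemma iterSub_apply_of_forall_ne {c : Cell} {j m : ℕ} (hjm : j ≤ m)
    (hc : iterSub lam q α f j c = v) (hv : v ≠ 0)
    (hne : ∀ k, j < k → k ≤ m → cyc q α k ≠ v) :
    iterSub lam q α f m c = v := by
  induction m, hjm using Nat.le_induction with
  | base => exact hc
  | succ m hjm ih =>
    have ih := ih fun k hk hkm => hne k hk (by omega)
    rw [iterSub, substep_apply_of_ne (ih ▸ hv) (ih ▸ (hne (m + 1) (by omega) le_rfl).symm), ih]

end Substep

/-- A state of the slide at stage `α` after `j` substeps, with vacated box `b`. -/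
structure SlideInv (lam : List ℕ) (n α j : ℕ) (b : Cell) (g : Cell → ℕ) : Prop where
  one_le_stage : 1 ≤ α
  stage_le : α ≤ n
  inShape_bullet : inShape lam b
  apply_bullet : g b = 0
  zero_outside : ∀ c, ¬ inShape lam c → g c = 0
  mem : ∀ c, inShape lam c → c ≠ b → 1 ≤ g c ∧ g c ≤ n ∧ g c ≠ α
  existsUnique : ∀ v, 1 ≤ v → v ≤ n → v ≠ α → ∃! c, inShape lam c ∧ g c = v
  lt_of_covBy : ∀ c d, c ⋖ d → inShape lam d → c ≠ b → d ≠ b →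
    cycOrd n α (g c) < cycOrd n α (g d)
  lt_of_bullet_covBy : ∀ d, b ⋖ d → inShape lam d → j < cycOrd n α (g d)
  le_of_covBy_bullet : ∀ c, c ⋖ b → cycOrd n α (g c) ≤ j

namespace SlideInv

variable {lam : List ℕ} {n α j : ℕ} {b : Cell} {g : Cell → ℕ}

lemma isBullet_iff (h : SlideInv lam n α j b g) {c : Cell} : isBullet lam g c ↔ c = b := by
  refine ⟨fun ⟨hc, h0⟩ => ?_, fun hcb => hcb ▸ ⟨h.inShape_bullet, h.apply_bullet⟩⟩
  by_contra hcb
  exact Nat.one_le_iff_ne_zero.mp (h.mem c hc hcb).1 h0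

lemma eq_of_apply_eq (h : SlideInv lam n α j b g) {c d : Cell} (hc : inShape lam c)
    (hd : inShape lam d) (hcb : c ≠ b) (hcd : g c = g d) : c = d := by
  obtain ⟨h1, h2, h3⟩ := h.mem c hc hcb
  exact (h.existsUnique _ h1 h2 h3).unique ⟨hc, rfl⟩ ⟨hd, hcd.symm⟩

lemma eq_of_cycOrd_eq (h : SlideInv lam n α j b g) {c d : Cell} (hc : inShape lam c)
    (hd : inShape lam d) (hcb : c ≠ b) (hdb : d ≠ b)
    (hcd : cycOrd n α (g c) = cycOrd n α (g d)) : c = d := by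
  obtain ⟨hc1, hcn, -⟩ := h.mem c hc hcb
  obtain ⟨hd1, hdn, -⟩ := h.mem d hd hdb
  exact h.eq_of_apply_eq hc hd hcb
    (cycOrd_injective h.one_le_stage h.stage_le hc1 hcn hd1 hdn hcd)

lemma inC_iff (h : SlideInv lam n α j b g) {v : ℕ} {c : Cell} :
    inC lam g v c ↔ b ⋖ c ∧ inShape lam c ∧ g c = v := by
  simp only [Gromotion.inC_iff, h.isBullet_iff, exists_eq_right]
  tauto

lemma substep_eq_comp_swap (h : SlideInv lam n α j b g) {c : Cell} (hbc : b ⋖ c)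
    (hc : inShape lam c) (hcb : c ≠ b) :
    substep lam (g c) g = g ∘ Equiv.swap b c := by
  have hv0 : g c ≠ 0 := Nat.one_le_iff_ne_zero.mp (h.mem c hc hcb).1
  funext d
  rcases eq_or_ne d b with rfl | hdb
  · simpa using substep_apply_bullet ⟨h.inShape_bullet, h.apply_bullet⟩ hbc hc rfl hv0
  rcases eq_or_ne d c with rfl | hdc
  · rw [substep, if_pos (h.inC_iff.2 ⟨hbc, hc, rfl⟩)]
    simp [h.apply_bullet]
  rw [Function.comp_apply, Equiv.swap_apply_of_ne_of_ne hdb hdc, substep,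
    if_neg fun hC => hdc (h.eq_of_apply_eq hC.1 hc hdb hC.2.1),
    if_neg fun hB => hdb (h.isBullet_iff.1 hB.1)]

lemma substep_eq_self (h : SlideInv lam n α j b g) {v : ℕ}
    (hno : ∀ c, b ⋖ c → inShape lam c → g c ≠ v) : substep lam v g = g := by
  funext d
  rw [substep, if_neg fun hC => hno d (h.inC_iff.1 hC).1 hC.1 hC.2.1, if_neg]
  rintro ⟨-, hC | hC⟩ <;> exact hno _ (h.inC_iff.1 hC).1 hC.1 hC.2.1

lemma stay (h : SlideInv lam n α j b g)
    (hno : ∀ d, b ⋖ d → inShape lam d → cycOrd n α (g d) ≠ j + 1) :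
    SlideInv lam n α (j + 1) b g where
  __ := h
  lt_of_bullet_covBy d hbd hd := by
    have := h.lt_of_bullet_covBy d hbd hd; have := hno d hbd hd; omega
  le_of_covBy_bullet c hcb := by have := h.le_of_covBy_bullet c hcb; omega

lemma slide (h : SlideInv lam n α j b g) {c : Cell} (hbc : b ⋖ c) (hc : inShape lam c)
    (hj : cycOrd n α (g c) = j + 1) : SlideInv lam n α (j + 1) c (g ∘ Equiv.swap b c) := by
  have hb := h.inShape_bullet
  have hcb : c ≠ b := hbc.ne'
  have fix : ∀ d, d ≠ b → d ≠ c → (g ∘ Equiv.swap b c) d = g d := fun d hdb hdc => by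
    simp [Equiv.swap_apply_of_ne_of_ne hdb hdc]
  refine ⟨h.one_le_stage, h.stage_le, hc, by simp [h.apply_bullet], fun d hd => ?_,
    fun d hd hdc => ?_, fun v h1 h2 h3 => ?_, fun p q hpq hq hpc hqc => ?_, fun d hcd hd => ?_,
    fun p hpc => ?_⟩
  · rw [fix d (fun h => hd (h ▸ hb)) (fun h => hd (h ▸ hc)), h.zero_outside d hd]
  · exact h.mem _ ((inShape_swap hb hc).2 hd) (by simpa [Equiv.swap_apply_eq_iff] using hdc)
  · obtain ⟨e, ⟨he, hev⟩, hu⟩ := h.existsUnique v h1 h2 h3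
    refine ⟨Equiv.swap b c e, ⟨(inShape_swap hb hc).2 he, by simpa using hev⟩, ?_⟩
    rintro d ⟨hd, hdv⟩
    exact Equiv.swap_apply_eq_iff.1 (hu _ ⟨(inShape_swap hb hc).2 hd, hdv⟩)
  · rcases eq_or_ne p b with rfl | hpb
    · have hqb : q ≠ p := hpq.ne'
      have hlt := h.lt_of_bullet_covBy q hpq hq
      have hne : cycOrd n α (g q) ≠ j + 1 := fun he =>
        hqc (h.eq_of_cycOrd_eq hq hc hqb hcb (he.trans hj.symm))
      rw [fix q hqb hqc, Function.comp_apply, Equiv.swap_apply_left]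
      omega
    rcases eq_or_ne q b with rfl | hqb
    · have := h.le_of_covBy_bullet p hpq
      rw [fix p hpb hpc, Function.comp_apply, Equiv.swap_apply_left]
      omega
    rw [fix p hpb hpc, fix q hqb hqc]
    exact h.lt_of_covBy p q hpq hq hpb hqb
  · have hdb : d ≠ b := (hbc.lt.trans hcd.lt).ne'
    rw [fix d hdb hcd.ne', ← hj]
    exact h.lt_of_covBy c d hcd hd hcb hdb
  · rcases eq_or_ne p b with rfl | hpb
    · simp [hj]
    rw [fix p hpb hpc.ne, ← hj]
    exact (h.lt_of_covBy p c hpc hc hpb hcb).le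

lemma exists_substep (h : SlideInv lam n α j b g) (hj : j + 1 < n) :
    ∃ b', SlideInv lam n α (j + 1) b' (substep lam (cyc n α (j + 1)) g) := by
  have hα := h.one_le_stage
  have hαn := h.stage_le
  have hord : cycOrd n α (cyc n α (j + 1)) = j + 1 := cycOrd_cyc hα hαn hj
  by_cases hmove : ∃ c, b ⋖ c ∧ inShape lam c ∧ g c = cyc n α (j + 1)
  · obtain ⟨c, hbc, hc, hcw⟩ := hmove
    rw [← hcw, h.substep_eq_comp_swap hbc hc hbc.ne']
    exact ⟨c, h.slide hbc hc (hcw ▸ hord)⟩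
  · push Not at hmove
    rw [h.substep_eq_self hmove]
    refine ⟨b, h.stay fun d hbd hd he => hmove d hbd hd ?_⟩
    obtain ⟨h1, h2, -⟩ := h.mem d hd hbd.ne'
    rw [← he, cyc_cycOrd hα hαn h1 h2]

end SlideInv

structure IsCycStandard (lam : List ℕ) (n α : ℕ) (f : Cell → ℕ) : Prop where
  one_le_stage : 1 ≤ α
  stage_le : α ≤ n
  zero_outside : ∀ c, ¬ inShape lam c → f c = 0
  mem : ∀ c, inShape lam c → 1 ≤ f c ∧ f c ≤ n
  existsUnique : ∀ v, 1 ≤ v → v ≤ n → ∃! c, inShape lam c ∧ f c = v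
  lt_of_covBy : ∀ c d, c ⋖ d → inShape lam d → cycOrd n α (f c) < cycOrd n α (f d)

lemma cycOrd_one {n v : ℕ} (hv : 1 ≤ v) (hvn : v ≤ n) : cycOrd n 1 v = v - 1 := by
  rw [cycOrd_eq le_rfl (hv.trans hvn) hv hvn, if_pos hv]

lemma _root_.IncTab.entry_lt_of_covBy {lam : List ℕ} {n : ℕ} (T : IncTab lam n) {c d : Cell}
    (hcd : c ⋖ d) (hd : inShape lam d) : T.entry c < T.entry d := by
  rcases cell_covBy_iff.1 hcd with rfl | rfl
  · exact T.row_strict c.1 c.2 hd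
  · exact T.col_strict c.1 c.2 hd

lemma isCycStandard_of_isStandard {lam : List ℕ} {n : ℕ} {T : IncTab lam n}
    (hlam : IsPartition lam) (hT : IsStandard lam n T) (hn : 1 ≤ n) :
    IsCycStandard lam n 1 T.entry where
  one_le_stage := le_rfl
  stage_le := hn
  zero_outside := T.zero_outside
  mem c hc := ⟨T.entry_pos c hc, T.entry_le c hc⟩
  existsUnique := hT.2
  lt_of_covBy c d hcd hd := by
    have hc := inShape_of_le hlam hd hcd.le
    have := T.entry_lt_of_covBy hcd hd
    rw [cycOrd_one (T.entry_pos c hc) (T.entry_le c hc), cycOrd_one (T.entry_pos d hd)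
      (T.entry_le d hd)]
    have := T.entry_pos c hc
    omega

namespace IsCycStandard

variable {lam : List ℕ} {n α : ℕ} {f : Cell → ℕ}

lemma eq_of_apply_eq (h : IsCycStandard lam n α f) {c d : Cell} (hc : inShape lam c)
    (hd : inShape lam d) (hcd : f c = f d) : c = d :=
  (h.existsUnique _ (h.mem c hc).1 (h.mem c hc).2).unique ⟨hc, rfl⟩ ⟨hd, hcd.symm⟩

lemma corner (h : IsCycStandard lam n α f) : inShape lam (0, 0) ∧ f (0, 0) = α := by
  obtain ⟨e, ⟨he, heα⟩, -⟩ := h.existsUnique α h.one_le_stage h.stage_le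
  have h0 : ((0, 0) : Cell) ≤ e := ⟨Nat.zero_le _, Nat.zero_le _⟩
  suffices e = (0, 0) from this ▸ ⟨he, heα⟩
  by_contra hne
  obtain ⟨p, -, hpe⟩ := exists_le_covBy_of_lt (h0.lt_of_ne (Ne.symm hne))
  have := h.lt_of_covBy p e hpe he
  rw [heα, cycOrd_self h.one_le_stage h.stage_le] at this
  omega

lemma slideInv_zero (h : IsCycStandard lam n α f) :
    SlideInv lam n α 0 (0, 0) (iterSub lam n α f 0) := by
  obtain ⟨h00, hα⟩ := h.corner
  have fix : ∀ c : Cell, c ≠ (0, 0) → iterSub lam n α f 0 c = f c := fun c hc => by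
    simp [iterSub, hc]
  have hne : ∀ c, inShape lam c → c ≠ (0, 0) → f c ≠ α := fun c hc hc0 hcα =>
    hc0 (h.eq_of_apply_eq hc h00 (hcα.trans hα.symm))
  refine ⟨h.one_le_stage, h.stage_le, h00, by simp [iterSub, hα], fun c hc => ?_,
    fun c hc hc0 => ?_, fun v h1 h2 h3 => ?_, fun c d hcd hd hc0 hd0 => ?_,
    fun d h0d hd => ?_, fun c hc0 => ?_⟩
  · rw [fix c fun h => hc (h ▸ h00), h.zero_outside c hc]
  · rw [fix c hc0]; exact ⟨(h.mem c hc).1, (h.mem c hc).2, hne c hc hc0⟩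
  · obtain ⟨e, ⟨he, hev⟩, hu⟩ := h.existsUnique v h1 h2
    have he0 : e ≠ (0, 0) := fun he0 => h3 (by rw [← hev, he0, hα])
    refine ⟨e, ⟨he, by rw [fix e he0, hev]⟩, fun d ⟨hd, hdv⟩ => hu d ⟨hd, ?_⟩⟩
    rwa [fix d fun hd0 => by simp [iterSub, hd0, hα] at hdv; omega] at hdv
  · rw [fix c hc0, fix d hd0]; exact h.lt_of_covBy c d hcd hd
  · have hd0 : d ≠ (0, 0) := h0d.ne'
    rw [fix d hd0]
    exact cycOrd_pos h.one_le_stage h.stage_le (h.mem d hd).1 (h.mem d hd).2 (hne d hd hd0)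
  · rcases cell_covBy_iff.1 hc0 with h | h <;> simp at h

lemma exists_slideInv (h : IsCycStandard lam n α f) {j : ℕ} (hj : j < n) :
    ∃ b, SlideInv lam n α j b (iterSub lam n α f j) := by
  induction j with
  | zero => exact ⟨_, h.slideInv_zero⟩
  | succ j ih =>
    obtain ⟨b, hb⟩ := ih (by omega)
    exact hb.exists_substep hj

lemma iterSub_apply_of_lt_cycOrd (h : IsCycStandard lam n α f) {c : Cell} {j : ℕ}
    (hc : inShape lam c) (hj : j < cycOrd n α (f c)) : iterSub lam n α f j c = f c := by
  have hα := h.one_le_stage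
  have hαn := h.stage_le
  obtain ⟨h1, h2⟩ := h.mem c hc
  have hcα : f c ≠ α := fun he => by rw [he, cycOrd_self hα hαn] at hj; omega
  refine iterSub_apply_of_forall_ne (Nat.zero_le j) (iterSub_zero_apply hcα) (by omega)
    fun k _ hkj he => ?_
  have := cycOrd_cyc (j := k) hα hαn (by have := cycOrd_lt hα hαn h1 h2; omega)
  rw [he] at this
  omega

lemma row_eq_of_moveAt (h : IsCycStandard lam n α f) {c : Cell} {i j : ℕ}
    (hc : inShape lam c) (hj : j < cycOrd n α (f c))
    (hmove : moveAt lam (iterSub lam n α f j) (f c) i) : c.1 = i := by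
  obtain ⟨b, hb⟩ := h.exists_slideInv (j := j)
    (hj.trans (cycOrd_lt h.one_le_stage h.stage_le (h.mem c hc).1 (h.mem c hc).2))
  obtain ⟨p, -, rfl, hC⟩ := hmove
  obtain ⟨hpb, hd, hdv⟩ := hb.inC_iff.1 hC
  rw [← h.iterSub_apply_of_lt_cycOrd hc hj] at hdv
  exact congrArg Prod.fst (hb.eq_of_apply_eq hd hc hpb.ne' hdv).symm

end IsCycStandard

section Gromote

variable {lam : List ℕ} {n α : ℕ} {f : Cell → ℕ}

lemma SlideInv.isCycStandard_update (hlam : IsPartition lam) {b : Cell} {g : Cell → ℕ}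
    (h : SlideInv lam n α (n - 1) b g) :
    IsCycStandard lam n (α % n + 1) (Function.update g b α) := by
  have hα := h.one_le_stage
  have hαn := h.stage_le
  have hb := h.inShape_bullet
  have fix : ∀ c, c ≠ b → Function.update g b α c = g c := fun c hc =>
    Function.update_of_ne hc _ _
  have shift : ∀ c, inShape lam c → c ≠ b →
      cycOrd n (α % n + 1) (g c) + 1 = cycOrd n α (g c) := fun c hc hcb => by
    obtain ⟨h1, h2, h3⟩ := h.mem c hc hcb
    have := cycOrd_pos hα hαn h1 h2 h3
    rw [cycOrd_succ hα hαn h1 h2, if_neg h3]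
    omega
  refine ⟨by omega, Nat.mod_lt α (by omega), fun c hc => ?_, fun c hc => ?_, fun v h1 h2 => ?_,
    fun c d hcd hd => ?_⟩
  · rw [fix c fun h => hc (h ▸ hb), h.zero_outside c hc]
  · rcases eq_or_ne c b with rfl | hcb
    · simp [hα, hαn]
    · rw [fix c hcb]; exact ⟨(h.mem c hc hcb).1, (h.mem c hc hcb).2.1⟩
  · rcases eq_or_ne v α with rfl | hvα
    · refine ⟨b, ⟨hb, by simp⟩, fun d ⟨hd, hdv⟩ => ?_⟩
      by_contra hdb
      exact (h.mem d hd hdb).2.2 (by rwa [fix d hdb] at hdv)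
    · obtain ⟨e, ⟨he, hev⟩, hu⟩ := h.existsUnique v h1 h2 hvα
      have heb : e ≠ b := fun heb => by rw [heb, h.apply_bullet] at hev; omega
      refine ⟨e, ⟨he, by rw [fix e heb, hev]⟩, fun d ⟨hd, hdv⟩ => hu d ⟨hd, ?_⟩⟩
      rcases eq_or_ne d b with rfl | hdb
      · simp at hdv; omega
      · rwa [fix d hdb] at hdv
  · have hc := inShape_of_le hlam hd hcd.le
    rcases eq_or_ne c b with rfl | hcb
    · have := h.lt_of_bullet_covBy d hcd hd
      have := cycOrd_lt hα hαn (h.mem d hd hcd.ne').1 (h.mem d hd hcd.ne').2.1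
      omega
    rcases eq_or_ne d b with rfl | hdb
    · obtain ⟨h1, h2, -⟩ := h.mem c hc hcb
      have := cycOrd_lt hα hαn h1 h2
      have := shift c hc hcb
      rw [fix c hcb, Function.update_self, cycOrd_succ hα hαn hα hαn, if_pos rfl]
      omega
    · have := h.lt_of_covBy c d hcd hd hcb hdb
      have := shift c hc hcb
      have := shift d hd hdb
      rw [fix c hcb, fix d hdb]
      omega

lemma gromote_eq_update {b : Cell} (h : SlideInv lam n α (n - 1) b (iterSub lam n α f (n - 1))) :
    gromote lam n α f = Function.update (iterSub lam n α f (n - 1)) b α := by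
  funext c
  rcases eq_or_ne c b with rfl | hcb
  · simp [gromote, h.inShape_bullet, h.apply_bullet]
  · rw [Function.update_of_ne hcb, gromote,
      if_neg fun hB : inShape lam c ∧ _ = 0 => hcb (h.isBullet_iff.1 hB)]

lemma isCycStandard_gromote (hlam : IsPartition lam) (h : IsCycStandard lam n α f) :
    IsCycStandard lam n (α % n + 1) (gromote lam n α f) := by
  obtain ⟨b, hb⟩ := h.exists_slideInv (j := n - 1)
    (by have := h.one_le_stage; have := h.stage_le; omega)
  rw [gromote_eq_update hb]
  exact hb.isCycStandard_update hlam

lemma isCycStandard_gromIter (hlam : IsPartition lam) (h : IsCycStandard lam n 1 f) {k : ℕ}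
    (hk : k < n) : IsCycStandard lam n (k + 1) (gromIter lam n f k) := by
  induction k with
  | zero => exact h
  | succ k ih =>
    have := isCycStandard_gromote hlam (ih (by omega))
    rw [Nat.mod_eq_of_lt hk] at this
    rwa [gromIter, Nat.mod_eq_of_lt (by omega : k < n)]

lemma IsCycStandard.gromote_apply_of_iterSub_apply (h : IsCycStandard lam n α f) {p : Cell}
    {v : ℕ} (hv : 1 ≤ v) (hvn : v ≤ n) (hp : iterSub lam n α f (cycOrd n α v) p = v) :
    gromote lam n α f p = v := by
  have hα := h.one_le_stage
  have hαn := h.stage_le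
  have hfin : iterSub lam n α f (n - 1) p = v :=
    iterSub_apply_of_forall_ne (by have := cycOrd_lt hα hαn hv hvn; omega) hp (by omega)
      fun k hk hkn he => by
        have := cycOrd_cyc (j := k) hα hαn (by omega)
        rw [he] at this
        omega
  obtain ⟨b, hb⟩ := h.exists_slideInv (j := n - 1) (by omega)
  have hpb : p ≠ b := fun he => by rw [he, hb.apply_bullet] at hfin; omega
  rw [gromote_eq_update hb, Function.update_of_ne hpb, hfin]

/-- An entry other than `α` either stays or moves into the vacated box next to it, at the
substep processing its own letter. -/
lemma IsCycStandard.exists_gromote_apply_eq (h : IsCycStandard lam n α f) {c : Cell}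
    (hc : inShape lam c) (hcα : f c ≠ α) :
    ∃ c', inShape lam c' ∧ gromote lam n α f c' = f c ∧ (c' = c ∨ c' ⋖ c ∧
      (c'.1 < c.1 → moveAt lam (iterSub lam n α f (cycOrd n α (f c) - 1)) (f c) c.1)) := by
  have hα := h.one_le_stage
  have hαn := h.stage_le
  obtain ⟨h1, h2⟩ := h.mem c hc
  obtain ⟨t, ht⟩ : ∃ t, cycOrd n α (f c) = t + 1 :=
    ⟨_, (Nat.succ_pred_eq_of_pos (cycOrd_pos hα hαn h1 h2 hcα)).symm⟩
  have hg : iterSub lam n α f t c = f c := h.iterSub_apply_of_lt_cycOrd hc (by omega)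
  obtain ⟨b, hb⟩ := h.exists_slideInv (j := t) (by have := cycOrd_lt hα hαn h1 h2; omega)
  have hstep : iterSub lam n α f (t + 1) = substep lam (f c) (iterSub lam n α f t) := by
    rw [iterSub, ← ht, cyc_cycOrd hα hαn h1 h2]
  rw [ht, Nat.add_sub_cancel]
  by_cases hbc : b ⋖ c
  · have hmove : iterSub lam n α f (t + 1) b = f c := by
      rw [hstep]
      exact substep_apply_bullet ⟨hb.inShape_bullet, hb.apply_bullet⟩ hbc hc hg (by omega)
    refine ⟨b, hb.inShape_bullet, h.gromote_apply_of_iterSub_apply h1 h2 (ht ▸ hmove),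
      Or.inr ⟨hbc, fun hlt => ?_⟩⟩
    exact moveAt_of_covBy ⟨hb.inShape_bullet, hb.apply_bullet⟩ hbc hlt hc hg
  · have hstay : iterSub lam n α f (t + 1) c = f c := by
      rw [hstep, hb.substep_eq_self fun d hbd hd hdv => hbc ?_, hg]
      rwa [hb.eq_of_apply_eq hd hc hbd.ne' (hdv.trans hg.symm)] at hbd
    exact ⟨c, hc, h.gromote_apply_of_iterSub_apply h1 h2 (ht ▸ hstay), Or.inl rfl⟩

end Gromote

section Promotion

variable {lam : List ℕ} {n : ℕ} {T : IncTab lam n}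

lemma isCycStandard_gromIter_of_isStandard (hlam : IsPartition lam) (hT : IsStandard lam n T)
    {α : ℕ} (hα : 1 ≤ α) (hαn : α ≤ n) :
    IsCycStandard lam n α (gromIter lam n T.entry (α - 1)) := by
  have := isCycStandard_gromIter hlam (isCycStandard_of_isStandard hlam hT (hα.trans hαn))
    (k := α - 1) (by omega)
  rwa [Nat.sub_add_cancel hα] at this

lemma promEdge_of_moveAt {i α v : ℕ} (hα : 1 ≤ α) (hαn : α ≤ n) (hv : 1 ≤ v)
    (hvn : v ≤ n) (hvα : v ≠ α)
    (h : moveAt lam (iterSub lam n α (gromIter lam n T.entry (α - 1)) (cycOrd n α v - 1)) v i) :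
    promEdge lam n i T α v := by
  have := cycOrd_pos hα hαn hv hvn hvα
  have := cycOrd_lt hα hαn hv hvn
  refine ⟨hα, hαn, _, by omega, ?_, h⟩
  rw [Nat.sub_add_cancel (by omega), cyc_cycOrd hα hαn hv hvn]

lemma exists_gromIter_apply_eq (hlam : IsPartition lam) (hT : IsStandard lam n T) {c₀ : Cell}
    (hc₀ : inShape lam c₀) {k : ℕ} (hk : k < T.entry c₀) :
    ∃ c, inShape lam c ∧ gromIter lam n T.entry k c = T.entry c₀ ∧ c.1 ≤ c₀.1 ∧
      ∀ i, c.1 < i → i ≤ c₀.1 → ∃ α ≤ k, promEdge lam n i T α (T.entry c₀) := by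
  have hv := T.entry_pos c₀ hc₀
  have hvn := T.entry_le c₀ hc₀
  induction k with
  | zero => exact ⟨c₀, hc₀, rfl, le_rfl, fun i h1 h2 => by omega⟩
  | succ k ih =>
    obtain ⟨c, hc, hcv, hcle, hedges⟩ := ih (by omega)
    have hstd := isCycStandard_gromIter_of_isStandard hlam hT (α := k + 1) (by omega) (by omega)
    rw [Nat.add_sub_cancel] at hstd
    obtain ⟨c', hc', hc'v, hcases⟩ := hstd.exists_gromote_apply_eq hc (by omega)
    have hiter : gromIter lam n T.entry (k + 1) c' = T.entry c₀ := by
      rw [gromIter, Nat.mod_eq_of_lt (by omega), hc'v, hcv]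
    rcases hcases with rfl | ⟨hcov, hmove⟩
    · exact ⟨c', hc', hiter, hcle, fun i h1 h2 =>
        (hedges i h1 h2).imp fun α hα => ⟨by omega, hα.2⟩⟩
    have hrow : c'.1 ≤ c.1 ∧ c.1 ≤ c'.1 + 1 := by
      rcases cell_covBy_iff.1 hcov with h | h <;> rw [h] <;> simp
    refine ⟨c', hc', hiter, by omega, fun i h1 h2 => ?_⟩
    rcases lt_or_ge c.1 i with hci | hic
    · exact (hedges i hci h2).imp fun α hα => ⟨by omega, hα.2⟩
    obtain rfl : i = c.1 := by omega
    rw [hcv] at hmove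
    refine ⟨k + 1, le_rfl, promEdge_of_moveAt (by omega) (by omega) hv hvn (by omega) ?_⟩
    rw [Nat.add_sub_cancel]
    exact hmove (by omega)

lemma not_promEdge_of_row_lt (hlam : IsPartition lam) (hT : IsStandard lam n T) {c₀ : Cell}
    (hc₀ : inShape lam c₀) {i α : ℕ} (hi : c₀.1 < i) (hα : α < T.entry c₀) :
    ¬ promEdge lam n i T α (T.entry c₀) := by
  rintro ⟨hα1, hαn, j, hj, hcyc, hmove⟩
  obtain ⟨c, hc, hcv, hcle, -⟩ :=
    exists_gromIter_apply_eq hlam hT hc₀ (k := α - 1) (by omega)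
  have hstd := isCycStandard_gromIter_of_isStandard hlam hT hα1 hαn
  have hord : cycOrd n α (T.entry c₀) = j + 1 := by
    rw [← hcyc, cycOrd_cyc hα1 hαn (by omega)]
  rw [← hcv] at hord hmove
  have := hstd.row_eq_of_moveAt hc (by omega) hmove
  omega

lemma exists_promEdge_of_le_row (hlam : IsPartition lam) (hT : IsStandard lam n T) {c₀ : Cell}
    (hc₀ : inShape lam c₀) {i : ℕ} (hi : 1 ≤ i) (hic : i ≤ c₀.1) :
    ∃ α < T.entry c₀, promEdge lam n i T α (T.entry c₀) := by
  have hv := T.entry_pos c₀ hc₀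
  obtain ⟨c, hc, hcv, -, hedges⟩ :=
    exists_gromIter_apply_eq hlam hT hc₀ (k := T.entry c₀ - 1) (by omega)
  have hstd := isCycStandard_gromIter_of_isStandard hlam hT hv (T.entry_le c₀ hc₀)
  obtain ⟨h00, hcorner⟩ := hstd.corner
  obtain rfl : c = (0, 0) := hstd.eq_of_apply_eq hc h00 (hcv.trans hcorner.symm)
  exact (hedges i hi hic).imp fun α hα => ⟨by omega, hα.2⟩

theorem nonexcedance_iff (hlam : IsPartition lam) (hT : IsStandard lam n T) {i v : ℕ}
    (hi : 1 ≤ i) (hv : 1 ≤ v) (hvn : v ≤ n) :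
    (¬ ∃ α, α < v ∧ promEdge lam n i T α v) ↔
      ∃ c : Cell, inShape lam c ∧ T.entry c = v ∧ c.1 < i := by
  constructor
  · obtain ⟨c₀, ⟨hc₀, rfl⟩, -⟩ := hT.2 v hv hvn
    refine fun hno => ⟨c₀, hc₀, rfl, not_le.1 fun hic => hno ?_⟩
    exact exists_promEdge_of_le_row hlam hT hc₀ hi hic
  · rintro ⟨c, hc, rfl, hci⟩ ⟨α, hα, he⟩
    exact not_promEdge_of_row_lt hlam hT hc hci hα he

end Promotion

section Reconstruction

variable {lam : List ℕ} {n : ℕ}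

def rowEntries (lam : List ℕ) (f : Cell → ℕ) (r : ℕ) : Finset ℕ :=
  Finset.univ.image fun m : Fin (lam.getD r 0) => f (r, m)

lemma mem_rowEntries {f : Cell → ℕ} {r v : ℕ} :
    v ∈ rowEntries lam f r ↔ ∃ c : Cell, inShape lam c ∧ f c = v ∧ c.1 = r := by
  simp only [rowEntries, Finset.mem_image, Finset.mem_univ, true_and]
  constructor
  · rintro ⟨m, rfl⟩
    exact ⟨(r, m), m.2, rfl, rfl⟩
  · rintro ⟨⟨r, m⟩, hc, rfl, rfl⟩
    exact ⟨⟨m, hc⟩, rfl⟩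

lemma _root_.IncTab.strictMono_row (T : IncTab lam n) (r : ℕ) :
    StrictMono fun m : Fin (lam.getD r 0) => T.entry (r, m) := by
  have : StrictMonoOn (fun m => T.entry (r, m)) (Set.Iio (lam.getD r 0)) :=
    strictMonoOn_of_lt_add_one Set.ordConnected_Iio fun m _ _ hm => T.row_strict r m hm
  exact fun x y hxy => this x.2 y.2 hxy

lemma card_rowEntries (T : IncTab lam n) (r : ℕ) :
    (rowEntries lam T.entry r).card = lam.getD r 0 := by
  rw [rowEntries, Finset.card_image_of_injective _ (T.strictMono_row r).injective,
    Finset.card_univ, Fintype.card_fin]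

lemma _root_.IncTab.entry_eq_of_rowEntries_eq (T T' : IncTab lam n)
    (h : ∀ r, rowEntries lam T.entry r = rowEntries lam T'.entry r) : T.entry = T'.entry := by
  funext c
  by_cases hc : inShape lam c
  · have hcard := card_rowEntries T c.1
    have hT := Finset.orderEmbOfFin_unique hcard
      (fun m => mem_rowEntries.2 ⟨(c.1, m), m.2, rfl, rfl⟩) (T.strictMono_row c.1)
    have hT' := Finset.orderEmbOfFin_unique hcard
      (fun m => h c.1 ▸ mem_rowEntries.2 ⟨(c.1, m), m.2, rfl, rfl⟩) (T'.strictMono_row c.1)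
    exact congrFun (hT.trans hT'.symm) ⟨c.2, hc⟩
  · rw [T.zero_outside c hc, T'.zero_outside c hc]

lemma getElem?_eq_of_isPartition (hlam : IsPartition lam) (r : ℕ) :
    lam[r]? = if lam.getD r 0 = 0 then none else some (lam.getD r 0) := by
  rw [List.getD_eq_getElem?_getD]
  cases h : lam[r]? with
  | none => simp
  | some x => simp [(hlam.2 x (List.mem_of_getElem? h)).ne']

lemma eq_of_getD_eq {lam' : List ℕ} (hlam : IsPartition lam) (hlam' : IsPartition lam')
    (h : ∀ r, lam.getD r 0 = lam'.getD r 0) : lam = lam' :=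
  List.ext_getElem? fun r => by
    rw [getElem?_eq_of_isPartition hlam, getElem?_eq_of_isPartition hlam', h]

lemma rowEntries_subset {lam' : List ℕ} {T : IncTab lam n} {T' : IncTab lam' n}
    (hT' : IsStandard lam' n T')
    (hrow : ∀ c c', inShape lam c → inShape lam' c' → T.entry c = T'.entry c' → c.1 = c'.1)
    (r : ℕ) : rowEntries lam T.entry r ⊆ rowEntries lam' T'.entry r := by
  intro v hv
  obtain ⟨c, hc, rfl, rfl⟩ := mem_rowEntries.1 hv
  obtain ⟨c', ⟨hc', hc'v⟩, -⟩ := hT'.2 _ (T.entry_pos c hc) (T.entry_le c hc)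
  exact mem_rowEntries.2 ⟨c', hc', hc'v, (hrow c c' hc hc' hc'v.symm).symm⟩

end Reconstruction

lemma exists_row_lt_iff {lam : List ℕ} {n : ℕ} {T : IncTab lam n} (hT : IsStandard lam n T)
    {c : Cell} (hc : inShape lam c) {i : ℕ} :
    (∃ d : Cell, inShape lam d ∧ T.entry d = T.entry c ∧ d.1 < i) ↔ c.1 < i := by
  refine ⟨fun ⟨d, hd, hdc, hdi⟩ => ?_, fun h => ⟨c, hc, rfl, h⟩⟩
  obtain ⟨e, -, hu⟩ := hT.2 _ (T.entry_pos c hc) (T.entry_le c hc)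
  rwa [hu c ⟨hc, rfl⟩, ← hu d ⟨hd, hdc⟩]

lemma row_eq_of_promEdge_iff {lam lam' : List ℕ} {n : ℕ} {T : IncTab lam n}
    {T' : IncTab lam' n} (hlam : IsPartition lam) (hlam' : IsPartition lam')
    (hT : IsStandard lam n T) (hT' : IsStandard lam' n T')
    (hedge : ∀ i α β, promEdge lam n i T α β ↔ promEdge lam' n i T' α β) {c c' : Cell}
    (hc : inShape lam c) (hc' : inShape lam' c') (hcc' : T.entry c = T'.entry c') : c.1 = c'.1 := by
  have h1 := T.entry_pos c hc
  have h2 := T.entry_le c hc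
  have key : ∀ i, 1 ≤ i → (c.1 < i ↔ c'.1 < i) := fun i hi => by
    rw [← exists_row_lt_iff hT hc, ← exists_row_lt_iff hT' hc', ← hcc',
      ← nonexcedance_iff hlam hT hi h1 h2, ← nonexcedance_iff hlam' hT' hi h1 h2]
    simp only [hedge]
  have := key (c.1 + 1) (by omega)
  have := key (c'.1 + 1) (by omega)
  omega

theorem eq_of_promEdge_iff {lam lam' : List ℕ} {n : ℕ} {T : IncTab lam n}
    {T' : IncTab lam' n} (hlam : IsPartition lam) (hlam' : IsPartition lam')
    (hT : IsStandard lam n T) (hT' : IsStandard lam' n T')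
    (hedge : ∀ i α β, promEdge lam n i T α β ↔ promEdge lam' n i T' α β) :
    lam = lam' ∧ T.entry = T'.entry := by
  have hrow := fun c c' => row_eq_of_promEdge_iff (c := c) (c' := c') hlam hlam' hT hT' hedge
  have hrows : ∀ r, rowEntries lam T.entry r = rowEntries lam' T'.entry r := fun r =>
    (rowEntries_subset hT' hrow r).antisymm
      (rowEntries_subset hT (fun c' c hc' hc h => (hrow c c' hc hc' h.symm).symm) r)
  obtain rfl : lam = lam' := eq_of_getD_eq hlam hlam' fun r => by
    rw [← card_rowEntries T, ← card_rowEntries T', hrows]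
  exact ⟨rfl, T.entry_eq_of_rowEntries_eq T' hrows⟩

end Gromotion

/-- `j` is a nonexcedance of `prom_i(T)` iff `j` lies in the first `i` rows
of `T`; consequently a standard Young tableau of arbitrary shape is uniquely determined
by its tuple of promotion digraphs. -/
theorem nonexcedances_are_first_rows
    (lam : List ℕ) (hlam : IsPartition lam) (n : ℕ)
    (T : IncTab lam n) (hT : IsStandard lam n T) :
    (∀ i, 1 ≤ i → ∀ j, 1 ≤ j → j ≤ n →
      ((¬ ∃ α, α < j ∧ promEdge lam n i T α j) ↔
        ∃ c : Cell, inShape lam c ∧ T.entry c = j ∧ c.1 < i)) ∧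
    (∀ lam' : List ℕ, IsPartition lam' → ∀ T' : IncTab lam' n, IsStandard lam' n T' →
      (∀ i α β, promEdge lam n i T α β ↔ promEdge lam' n i T' α β) →
      lam = lam' ∧ T.entry = T'.entry) :=
  ⟨fun _ hi _ hj hjn => Gromotion.nonexcedance_iff hlam hT hi hj hjn,
    fun _ hlam' _ hT' hedge => Gromotion.eq_of_promEdge_iff hlam hlam' hT hT' hedge⟩
end

section
/- Let w = w_1…w_n be the lattice word of a standard Young tableau T of shape λ. Define j_0 = 1 and, inductively, j_i to be the smallest index greater than j_{i−1} at which the prefix w_1…w_{j_i} contains equally many letters i and i+1 (if such an index exists). Then there is some k ≤ ℓ(λ)−1 such that j_i exists exactly for i ≤ k, and the sequence 1 < j_1 < j_2 < … < j_k is strictly increasing; moreover j_i is precisely the entry of T that moves from row i+1 to row i during promotion. -/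
open Classical

/-! Promotion removes the entry `1` and slides the resulting hole through the entries
`2, 3, …` in turn. Once the entries `≤ m` have been absorbed, the hole sits in some row `r`
right after the last entry `≤ m` of that row, say in column `c`, and the cell below it holds an
entry `> m`. So among the first `m` letters of the lattice word there are `c + 1` letters `r + 1`
and at most `c` letters `r + 2`, unless the hole has just moved down, in which case both counts
are `c + 1`. Hence the hole leaves row `r` exactly at the first `(r + 1)`-balance point after
the one at which it entered row `r`. -/

section

variable {lam : List ℕ} {n : ℕ}

lemma inShape_of_col_le {i j j' : ℕ} (h : inShape lam (i, j)) (hj : j' ≤ j) :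
    inShape lam (i, j') :=
  lt_of_le_of_lt hj h

lemma inShape_of_succ_row (hlam : lam.Pairwise (· ≥ ·)) {i j : ℕ}
    (h : inShape lam (i + 1, j)) : inShape lam (i, j) := by
  have hi : i + 1 < lam.length := by
    by_contra! hi
    simp only [inShape] at h
    rw [List.getD_eq_default _ _ hi] at h
    omega
  simp only [inShape, List.getD_eq_getElem _ _ hi,
    List.getD_eq_getElem _ _ (Nat.lt_of_succ_lt hi)] at h ⊢
  exact lt_of_lt_of_le h (List.pairwise_iff_getElem.mp hlam i (i + 1) _ hi (Nat.lt_succ_self i))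

lemma lt_length_of_inShape {c : Cell} (h : inShape lam c) : c.1 < lam.length := by
  by_contra! hc
  unfold inShape at h
  rw [List.getD_eq_default _ _ hc] at h
  omega

lemma IsStandard.eq_of_entry_eq {T : IncTab lam n} (hT : IsStandard lam n T) {x y : Cell}
    (hx : inShape lam x) (hy : inShape lam y) (hxy : T.entry x = T.entry y) : x = y := by
  obtain ⟨c, -, hc⟩ := hT.2 (T.entry x) (T.entry_pos x hx) (T.entry_le x hx)
  rw [hc x ⟨hx, rfl⟩, hc y ⟨hy, hxy.symm⟩]

namespace IncTab

variable (T : IncTab lam n)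

lemma entry_le_of_col_le {i j j' : ℕ} (hj : j ≤ j') (h : inShape lam (i, j')) :
    T.entry (i, j) ≤ T.entry (i, j') := by
  induction j', hj using Nat.le_induction with
  | base => exact le_rfl
  | succ m _ ih => exact (ih (inShape_of_col_le h m.le_succ)).trans (T.row_strict i m h).le

lemma cnt_le_of_lt_entry {r c m : ℕ} (h : inShape lam (r, c) → m < T.entry (r, c)) :
    cnt lam T.entry (r + 1) m ≤ c := by
  have hsub : (Finset.Icc 1 m).filter (fun v => appearsRow lam T.entry (r + 1) v)
      ⊆ (Finset.range c).image (fun j => T.entry (r, j)) := by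
    intro v hv
    simp only [Finset.mem_filter, Finset.mem_Icc, appearsRow, Nat.add_sub_cancel] at hv
    obtain ⟨⟨-, hvm⟩, -, j, hj, rfl⟩ := hv
    refine Finset.mem_image.mpr ⟨j, Finset.mem_range.mpr ?_, rfl⟩
    by_contra! hcj
    have := T.entry_le_of_col_le hcj hj
    have := h (inShape_of_col_le hj hcj)
    omega
  exact (Finset.card_le_card hsub).trans (Finset.card_image_le.trans (Finset.card_range c).le)

lemma cnt_eq_of_entry_le (hT : IsStandard lam n T) {r c m : ℕ} (hc : inShape lam (r, c))
    (hle : T.entry (r, c) ≤ m) (hlt : inShape lam (r, c + 1) → m < T.entry (r, c + 1)) :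
    cnt lam T.entry (r + 1) m = c + 1 := by
  refine le_antisymm (T.cnt_le_of_lt_entry hlt) ?_
  have hsub : (Finset.range (c + 1)).image (fun j => T.entry (r, j))
      ⊆ (Finset.Icc 1 m).filter (fun v => appearsRow lam T.entry (r + 1) v) := by
    intro v hv
    obtain ⟨j, hj, rfl⟩ := Finset.mem_image.mp hv
    have hjc : j ≤ c := Nat.lt_succ_iff.mp (Finset.mem_range.mp hj)
    have hjs : inShape lam (r, j) := inShape_of_col_le hc hjc
    simp only [Finset.mem_filter, Finset.mem_Icc, appearsRow, Nat.add_sub_cancel]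
    exact ⟨⟨T.entry_pos _ hjs, (T.entry_le_of_col_le hjc hc).trans hle⟩,
      Nat.le_add_left 1 r, j, hjs, rfl⟩
  have hinj : Set.InjOn (fun j => T.entry (r, j)) (Finset.range (c + 1)) := by
    intro a ha b hb hab
    simp only [Finset.coe_range, Set.mem_Iio] at ha hb
    have ha' : inShape lam (r, a) := inShape_of_col_le hc (Nat.lt_succ_iff.mp ha)
    have hb' : inShape lam (r, b) := inShape_of_col_le hc (Nat.lt_succ_iff.mp hb)
    exact (Prod.mk.inj (hT.eq_of_entry_eq ha' hb' hab)).2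
  rw [cnt, ← Finset.card_range (c + 1), ← Finset.card_image_of_injOn hinj]
  exact Finset.card_le_card hsub

lemma entry_zero_zero (hlam : lam.Pairwise (· ≥ ·)) (hT : IsStandard lam n T) (hn : 1 ≤ n) :
    inShape lam (0, 0) ∧ T.entry (0, 0) = 1 := by
  obtain ⟨⟨i, j⟩, ⟨hc, hce⟩, -⟩ := hT.2 1 le_rfl hn
  obtain ⟨rfl, rfl⟩ : i = 0 ∧ j = 0 := by
    refine ⟨?_, ?_⟩ <;> by_contra! hne
    · obtain ⟨i, rfl⟩ : ∃ i', i = i' + 1 := ⟨i - 1, by omega⟩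
      have := T.col_strict i j hc
      have := T.entry_pos _ (inShape_of_succ_row hlam hc)
      omega
    · obtain ⟨j, rfl⟩ : ∃ j', j = j' + 1 := ⟨j - 1, by omega⟩
      have := T.row_strict i j hc
      have := T.entry_pos _ (inShape_of_col_le hc j.le_succ)
      omega
  exact ⟨hc, hce⟩

/-- `b` is where the promotion hole sits once the entries `≤ m` have slid through it. -/
structure IsFrontier (m : ℕ) (b : Cell) : Prop where
  mem : inShape lam b
  entry_le : T.entry b ≤ m
  lt_right : inShape lam (b.1, b.2 + 1) → m < T.entry (b.1, b.2 + 1)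
  lt_below : inShape lam (b.1 + 1, b.2) → m < T.entry (b.1 + 1, b.2)

variable {T}

lemma IsFrontier.cnt_lt (hT : IsStandard lam n T) {m r c : ℕ} (h : T.IsFrontier m (r, c)) :
    cnt lam T.entry (r + 2) m < cnt lam T.entry (r + 1) m := by
  have hrow : cnt lam T.entry (r + 1) m = c + 1 :=
    T.cnt_eq_of_entry_le hT h.mem h.entry_le h.lt_right
  have hbelow : cnt lam T.entry (r + 2) m ≤ c := T.cnt_le_of_lt_entry h.lt_below
  omega

lemma IsFrontier.cnt_eq_of_entry_below (hT : IsStandard lam n T)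
    {m r c : ℕ} (h : T.IsFrontier m (r, c)) (hb : inShape lam (r + 1, c))
    (hbe : T.entry (r + 1, c) = m + 1) :
    cnt lam T.entry (r + 1) (m + 1) = cnt lam T.entry (r + 2) (m + 1) := by
  have hrow : cnt lam T.entry (r + 1) (m + 1) = c + 1 := by
    refine T.cnt_eq_of_entry_le hT h.mem (by have := h.entry_le; omega) fun hr => ?_
    have hne : T.entry (r, c + 1) ≠ T.entry (r + 1, c) := fun he => by
      simpa using hT.eq_of_entry_eq hr hb he
    have : m < T.entry (r, c + 1) := h.lt_right hr
    omega
  have hbelow : cnt lam T.entry (r + 2) (m + 1) = c + 1 :=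
    T.cnt_eq_of_entry_le hT hb hbe.le fun hr => hbe ▸ T.row_strict (r + 1) c hr
  omega

variable (T)

structure SlideState (g : Cell → ℕ) (m : ℕ) (b : Cell) : Prop where
  frontier : T.IsFrontier m b
  isBullet_iff : ∀ x, isBullet lam g x ↔ x = b
  eq_entry_of_lt_entry : ∀ x, m < T.entry x → g x = T.entry x
  eq_entry_of_lt : ∀ x, inShape lam x → m < g x → g x = T.entry x

end IncTab

def SlidesInto (p b : Cell) : Prop := p = (b.1, b.2 + 1) ∨ p = (b.1 + 1, b.2)

namespace IncTab.SlideState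

variable {T : IncTab lam n} {g : Cell → ℕ} {m : ℕ} {b p : Cell}

lemma moveAt_iff (hS : T.SlideState g m b) {v i : ℕ} :
    moveAt lam g v i ↔
      i = b.1 + 1 ∧ inShape lam (b.1 + 1, b.2) ∧ T.entry (b.1 + 1, b.2) = v := by
  have hbullet : isBullet lam g b := (hS.isBullet_iff b).2 rfl
  constructor
  · rintro ⟨x, hx, rfl, hxs, hxv, -⟩
    obtain rfl := (hS.isBullet_iff x).1 hx
    exact ⟨rfl, hxs, hS.eq_entry_of_lt_entry _ (hS.frontier.lt_below hxs) ▸ hxv⟩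
  · rintro ⟨rfl, hbs, rfl⟩
    exact ⟨b, hbullet, rfl, hbs, hS.eq_entry_of_lt_entry _ (hS.frontier.lt_below hbs),
      Or.inr ⟨Nat.le_add_left 1 b.1, by simpa using hbullet⟩⟩

lemma inC_iff (hT : IsStandard lam n T) (hS : T.SlideState g m b) (hp : inShape lam p)
    (hpe : T.entry p = m + 1) (x : Cell) : inC lam g (m + 1) x ↔ x = p ∧ SlidesInto p b := by
  obtain ⟨r, c⟩ := b
  constructor
  · rintro ⟨hx, hgx, hadj⟩
    obtain rfl : x = p :=
      hT.eq_of_entry_eq hx hp (by rw [← hS.eq_entry_of_lt x hx (by omega)]; omega)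
    refine ⟨rfl, ?_⟩
    obtain ⟨i, j⟩ := x
    rcases hadj with ⟨hj, hb⟩ | ⟨hi, hb⟩
    · have := (hS.isBullet_iff _).1 hb
      simp only [SlidesInto, Prod.mk.injEq] at this ⊢
      omega
    · have := (hS.isBullet_iff _).1 hb
      simp only [SlidesInto, Prod.mk.injEq] at this ⊢
      omega
  · rintro ⟨rfl, hpb⟩
    have hbullet : isBullet lam g (r, c) := (hS.isBullet_iff _).2 rfl
    refine ⟨hp, hS.eq_entry_of_lt_entry x (by omega) ▸ hpe, ?_⟩
    rcases hpb with rfl | rfl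
    · exact Or.inl ⟨Nat.le_add_left 1 c, by simpa using hbullet⟩
    · exact Or.inr ⟨Nat.le_add_left 1 r, by simpa using hbullet⟩

lemma substep_apply_of_slidesInto (hT : IsStandard lam n T) (hS : T.SlideState g m b)
    (hp : inShape lam p) (hpe : T.entry p = m + 1) (hpb : SlidesInto p b) (x : Cell) :
    substep lam (m + 1) g x = if x = p then 0 else if x = b then m + 1 else g x := by
  by_cases hxp : x = p
  · simp [substep, hxp, hS.inC_iff hT hp hpe, hpb]
  have hbullet : isBullet lam g x ∧ (inC lam g (m + 1) (x.1, x.2 + 1) ∨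
      inC lam g (m + 1) (x.1 + 1, x.2)) ↔ x = b := by
    simp only [hS.inC_iff hT hp hpe, hS.isBullet_iff, hpb, and_true]
    refine ⟨And.left, fun hxb => ⟨hxb, ?_⟩⟩
    subst hxb
    rcases hpb with rfl | rfl <;> simp
  simp only [substep]
  rw [if_neg fun h => hxp ((hS.inC_iff hT hp hpe x).1 h).1, if_neg hxp]
  exact if_congr hbullet rfl rfl

lemma substep_of_slidesInto (hT : IsStandard lam n T) (hS : T.SlideState g m b)
    (hp : inShape lam p) (hpe : T.entry p = m + 1) (hpb : SlidesInto p b) :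
    T.SlideState (substep lam (m + 1) g) (m + 1) p := by
  have happly := hS.substep_apply_of_slidesInto hT hp hpe hpb
  have hbm : T.entry b ≤ m := hS.frontier.entry_le
  refine ⟨?_, fun x => ?_, fun x hx => ?_, fun x hx hgx => ?_⟩
  · obtain ⟨i, j⟩ := p
    exact ⟨hp, hpe.le, fun h => hpe ▸ T.row_strict i j h, fun h => hpe ▸ T.col_strict i j h⟩
  · unfold isBullet
    rw [happly]
    split_ifs with hxp hxb
    · simpa [hxp] using hp
    · simp [hxp]
    · exact iff_of_false ((hS.isBullet_iff x).not.2 hxb) hxp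
  · have hxp : x ≠ p := by rintro rfl; omega
    have hxb : x ≠ b := by rintro rfl; omega
    rw [happly, if_neg hxp, if_neg hxb]
    exact hS.eq_entry_of_lt_entry x (by omega)
  · rw [happly] at hgx ⊢
    split_ifs at hgx ⊢ <;> first | omega | exact hS.eq_entry_of_lt x hx (by omega)

lemma substep_of_not_slidesInto (hT : IsStandard lam n T) (hS : T.SlideState g m b)
    (hp : inShape lam p) (hpe : T.entry p = m + 1) (hpb : ¬ SlidesInto p b) :
    T.SlideState (substep lam (m + 1) g) (m + 1) b := by
  have hstep : substep lam (m + 1) g = g := by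
    funext x
    have hC : ∀ y, ¬ inC lam g (m + 1) y := fun y hy => hpb ((hS.inC_iff hT hp hpe y).1 hy).2
    simp only [substep, hC, if_false, or_self, and_false]
  have hnext : ∀ y, inShape lam y → T.entry y ≠ m + 1 ∨ ¬ SlidesInto y b := fun y hy =>
    or_iff_not_imp_left.2 fun hy' => hT.eq_of_entry_eq hy hp (not_not.1 hy' ▸ hpe.symm) ▸ hpb
  obtain ⟨r, c⟩ := b
  rw [hstep]
  refine ⟨⟨hS.frontier.mem, by have := hS.frontier.entry_le; omega, fun h => ?_, fun h => ?_⟩,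
    hS.isBullet_iff, fun x hx => hS.eq_entry_of_lt_entry x (by omega),
    fun x hx hgx => hS.eq_entry_of_lt x hx (by omega)⟩
  · show m + 1 < T.entry (r, c + 1)
    have : m < T.entry (r, c + 1) := hS.frontier.lt_right h
    have := hnext (r, c + 1) h
    simp only [SlidesInto, true_or, not_true_eq_false, or_false] at this
    omega
  · show m + 1 < T.entry (r + 1, c)
    have : m < T.entry (r + 1, c) := hS.frontier.lt_below h
    have := hnext (r + 1, c) h
    simp only [SlidesInto, or_true, not_true_eq_false, or_false] at this
    omega

end IncTab.SlideState

lemma iterSub_one_succ (f : Cell → ℕ) {j : ℕ} (hj : j + 1 < n) :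
    iterSub lam n 1 f (j + 1) = substep lam (j + 2) (iterSub lam n 1 f j) := by
  simp only [iterSub, cyc, Nat.sub_self, zero_add, Nat.mod_eq_of_lt hj]

lemma promEdge_one_iff (T : IncTab lam n) {i β : ℕ} :
    promEdge lam n i T 1 β ↔
      ∃ j, j + 2 ≤ n ∧ β = j + 2 ∧ moveAt lam (iterSub lam n 1 T.entry j) β i := by
  have hcyc : ∀ j, j + 1 ≤ n - 1 → cyc n 1 (j + 1) = j + 2 := fun j hj => by
    simp only [cyc, Nat.sub_self, zero_add, Nat.mod_eq_of_lt (by omega : j + 1 < n)]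
  constructor
  · rintro ⟨-, -, j, hj, rfl, hmove⟩
    exact ⟨j, by omega, hcyc j hj, hmove⟩
  · rintro ⟨j, hj, rfl, hmove⟩
    exact ⟨le_rfl, by omega, j, by omega, hcyc j (by omega), hmove⟩

lemma IncTab.slideState_iterSub_zero (T : IncTab lam n) (hlam : lam.Pairwise (· ≥ ·))
    (hT : IsStandard lam n T) (hn : 1 ≤ n) :
    T.SlideState (iterSub lam n 1 T.entry 0) 1 (0, 0) := by
  obtain ⟨h00, h1⟩ := T.entry_zero_zero hlam hT hn
  have hg : ∀ x, iterSub lam n 1 T.entry 0 x = if x = (0, 0) then 0 else T.entry x := by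
    intro x
    by_cases hx : x = (0, 0) <;> simp [iterSub, hx, h1]
  have hfront : T.IsFrontier 1 (0, 0) :=
    ⟨h00, h1.le, fun h => h1 ▸ T.row_strict 0 0 h, fun h => h1 ▸ T.col_strict 0 0 h⟩
  refine ⟨hfront, fun x => ?_, fun x hx => ?_, fun x hx hgx => ?_⟩
  · unfold isBullet
    rw [hg]
    split_ifs with hx
    · simpa [hx] using h00
    · exact iff_of_false (fun ⟨hxs, h0⟩ => by have := T.entry_pos x hxs; omega) hx
  · rw [hg, if_neg (by rintro rfl; omega)]
  · rw [hg] at hgx ⊢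
    split_ifs at hgx ⊢ <;> omega

structure IsBalanceChain (T : IncTab lam n) (k : ℕ) (J : ℕ → ℕ) : Prop where
  zero : J 0 = 1
  succ : ∀ i, 1 ≤ i → i ≤ k →
      J (i - 1) < J i ∧ J i ≤ n ∧
      cnt lam T.entry i (J i) = cnt lam T.entry (i + 1) (J i) ∧
      ∀ m, J (i - 1) < m → m < J i → cnt lam T.entry i m ≠ cnt lam T.entry (i + 1) m
  last : ¬ ∃ m, J k < m ∧ m ≤ n ∧ cnt lam T.entry (k + 1) m = cnt lam T.entry (k + 2) m

/-- What the hole being in row `r` (0-indexed) after the entries `≤ m` have slid says about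
the balance points `J`. -/
structure IsHoleRow (T : IncTab lam n) (k : ℕ) (J : ℕ → ℕ) (m r : ℕ) : Prop where
  row_le : r ≤ k
  le : J r ≤ m
  cnt_ne : ∀ x, J r < x → x ≤ m → cnt lam T.entry (r + 1) x ≠ cnt lam T.entry (r + 2) x
  promEdge_of_le : ∀ i, 1 ≤ i → i ≤ r → promEdge lam n i T 1 (J i)

namespace IsHoleRow

variable {T : IncTab lam n} {k : ℕ} {J : ℕ → ℕ} {m r : ℕ}

lemma zero (hJ : IsBalanceChain T k J) : IsHoleRow T k J 1 0 :=
  ⟨Nat.zero_le k, hJ.zero.le, fun x hx hx' => by rw [hJ.zero] at hx; omega,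
    fun i hi hi' => by omega⟩

lemma lt_and_eq_of_cnt_eq (hJ : IsBalanceChain T k J) (h : IsHoleRow T k J m r)
    (hmn : m + 1 ≤ n) (hbal : cnt lam T.entry (r + 1) (m + 1) = cnt lam T.entry (r + 2) (m + 1)) :
    r < k ∧ J (r + 1) = m + 1 := by
  have hrk : r < k := by
    by_contra! hkr
    obtain rfl : r = k := le_antisymm h.row_le hkr
    exact hJ.last ⟨m + 1, by have := h.le; omega, hmn, hbal⟩
  obtain ⟨hlt, -, hbal', hfirst⟩ := hJ.succ (r + 1) (by omega) hrk
  simp only [Nat.add_sub_cancel] at hlt hfirst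
  have hJr : J r ≤ m := h.le
  refine ⟨hrk, le_antisymm ?_ ?_⟩
  · by_contra! hgt
    exact hfirst (m + 1) (by omega) hgt hbal
  · by_contra! hlt'
    exact h.cnt_ne _ hlt (by omega) hbal'

lemma succ_of_cnt_lt (h : IsHoleRow T k J m r)
    (hlt : cnt lam T.entry (r + 2) (m + 1) < cnt lam T.entry (r + 1) (m + 1)) :
    IsHoleRow T k J (m + 1) r := by
  refine ⟨h.row_le, h.le.trans m.le_succ, fun x hx hxm => ?_, h.promEdge_of_le⟩
  obtain hxm | rfl : x ≤ m ∨ x = m + 1 := by omega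
  · exact h.cnt_ne x hx hxm
  · exact hlt.ne'

lemma succ_row (hJ : IsBalanceChain T k J) (h : IsHoleRow T k J m r) (hmn : m + 1 ≤ n)
    (hbal : cnt lam T.entry (r + 1) (m + 1) = cnt lam T.entry (r + 2) (m + 1))
    (hedge : promEdge lam n (r + 1) T 1 (m + 1)) : IsHoleRow T k J (m + 1) (r + 1) := by
  obtain ⟨hrk, hJr⟩ := h.lt_and_eq_of_cnt_eq hJ hmn hbal
  refine ⟨hrk, hJr.le, fun x hx hxm => by omega, fun i hi hir => ?_⟩
  obtain hir | rfl : i ≤ r ∨ i = r + 1 := by omega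
  · exact h.promEdge_of_le i hi hir
  · exact hJr ▸ hedge

end IsHoleRow

lemma exists_slideState_isHoleRow (T : IncTab lam n) (hlam : lam.Pairwise (· ≥ ·))
    (hT : IsStandard lam n T) {k : ℕ} {J : ℕ → ℕ} (hJ : IsBalanceChain T k J)
    (hn : 1 ≤ n) :
    ∀ j, j + 1 ≤ n → ∃ b : Cell,
      T.SlideState (iterSub lam n 1 T.entry j) (j + 1) b ∧ IsHoleRow T k J (j + 1) b.1
  | 0, _ => ⟨(0, 0), T.slideState_iterSub_zero hlam hT hn, IsHoleRow.zero hJ⟩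
  | j + 1, hj => by
    obtain ⟨⟨r, c⟩, hS, hrow⟩ := exists_slideState_isHoleRow T hlam hT hJ hn j (by omega)
    obtain ⟨p, ⟨hp, hpe⟩, -⟩ := hT.2 (j + 2) (by omega) hj
    rw [iterSub_one_succ _ (by omega)]
    by_cases hpb : SlidesInto p (r, c)
    · have hS' := hS.substep_of_slidesInto hT hp hpe hpb
      rcases hpb with rfl | rfl
      · exact ⟨_, hS', hrow.succ_of_cnt_lt (hS'.frontier.cnt_lt hT)⟩
      · refine ⟨_, hS', hrow.succ_row hJ hj (hS.frontier.cnt_eq_of_entry_below hT hp hpe) ?_⟩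
        exact (promEdge_one_iff T).2 ⟨j, hj, rfl, hS.moveAt_iff.2 ⟨rfl, hp, hpe⟩⟩
    · have hS' := hS.substep_of_not_slidesInto hT hp hpe hpb
      exact ⟨_, hS', hrow.succ_of_cnt_lt (hS'.frontier.cnt_lt hT)⟩

end

/-- for the lattice word of a standard tableau `T`, the successive first
balance points `1 = J 0 < J 1 < … < J k` (with `k` maximal) satisfy `k ≤ ℓ(λ) - 1`, are
strictly increasing, and `J i` is precisely the entry moving from row `i+1` to row `i`
during promotion (and nothing moves from row `i+1` to row `i` for `i > k`). -/
theorem balance_points_of_promotion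
    (lam : List ℕ) (hlam : IsPartition lam) (n : ℕ)
    (T : IncTab lam n) (hT : IsStandard lam n T)
    (k : ℕ) (J : ℕ → ℕ) (hJ0 : J 0 = 1)
    (hJ : ∀ i, 1 ≤ i → i ≤ k →
      J (i - 1) < J i ∧ J i ≤ n ∧
      cnt lam T.entry i (J i) = cnt lam T.entry (i + 1) (J i) ∧
      ∀ m, J (i - 1) < m → m < J i → cnt lam T.entry i m ≠ cnt lam T.entry (i + 1) m)
    (hmax : ¬ ∃ m, J k < m ∧ m ≤ n ∧
      cnt lam T.entry (k + 1) m = cnt lam T.entry (k + 2) m) :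
    k ≤ lam.length - 1 ∧
    (∀ i, 1 ≤ i → i ≤ k → J (i - 1) < J i) ∧
    (∀ i, 1 ≤ i → i ≤ k → promEdge lam n i T 1 (J i)) ∧
    (∀ i, k < i → ∀ β, ¬ promEdge lam n i T 1 β) := by
  rcases Nat.eq_zero_or_pos n with rfl | hn
  · obtain rfl : k = 0 := by
      by_contra hk
      have := hJ 1 le_rfl (by omega)
      omega
    exact ⟨Nat.zero_le _, fun i _ _ => by omega, fun i _ _ => by omega,
      fun i _ β hedge => absurd hedge.2.1 (by omega)⟩
  have hchain : IsBalanceChain T k J := ⟨hJ0, hJ, hmax⟩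
  obtain ⟨⟨r, c⟩, hS, hrow⟩ :=
    exists_slideState_isHoleRow T hlam.1 hT hchain hn (n - 1) (by omega)
  have hkr : k ≤ r := by
    by_contra! hrk
    obtain ⟨hlt, hle, hbal, -⟩ := hJ (r + 1) (by omega) hrk
    exact hrow.cnt_ne _ hlt (by omega) hbal
  refine ⟨?_, fun i hi hik => (hJ i hi hik).1,
    fun i hi hik => hrow.promEdge_of_le i hi (hik.trans hkr), ?_⟩
  · have : r < lam.length := lt_length_of_inShape hS.frontier.mem
    omega
  · intro i hki β hedge
    obtain ⟨j, hjn, rfl, hmove⟩ := (promEdge_one_iff T).1 hedge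
    obtain ⟨⟨r, c⟩, hS, hrow⟩ :=
      exists_slideState_isHoleRow T hlam.1 hT hchain hn j (by omega)
    obtain ⟨rfl, hb, hbe⟩ := hS.moveAt_iff.1 hmove
    have := hrow.lt_and_eq_of_cnt_eq hchain hjn (hS.frontier.cnt_eq_of_entry_below hT hb hbe)
    omega
end

section
/- For an increasing tableau T with entries in {1,…,q} and any i ≥ 1, the promotion digraph prom_i(T) has no loops. -/
open Classical

/-! At the `α`-th gromotion the letter `α` is deleted from the corner before the slide starts,
and the `m`-th substep of the slide moves the letter `cyc q α m` with `0 < m < q`; along the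
cycled alphabet such a letter is never `α` itself. -/

theorem cyc_eq_self_iff {q α : ℕ} (hα : 1 ≤ α) (hαq : α ≤ q) (m : ℕ) :
    cyc q α m = α ↔ q ∣ m := by
  have hα_mod : (α - 1) % q = α - 1 := Nat.mod_eq_of_lt (by omega)
  have hshift : cyc q α m = α ↔ α - 1 + m ≡ α - 1 [MOD q] := by
    unfold cyc Nat.ModEq
    omega
  rw [hshift, Nat.add_modEq_left_iff]

theorem cyc_ne_self {q α m : ℕ} (hα : 1 ≤ α) (hαq : α ≤ q) (hm : 0 < m) (hmq : m < q) :
    cyc q α m ≠ α := fun h =>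
  absurd (Nat.le_of_dvd hm ((cyc_eq_self_iff hα hαq m).mp h)) (by omega)

theorem increasing_promotion_digraph_no_loops_general
    (lam : List ℕ) (q : ℕ)
    (T : IncTab lam q) (i : ℕ) (j : ℕ) :
    ¬ promEdge lam q i T j j := by
  rintro ⟨hj, hjq, m, hm, hcyc, -⟩
  exact cyc_ne_self hj hjq m.succ_pos (by omega) hcyc

/-- the promotion digraph of an increasing tableau has no loops. -/
theorem increasing_promotion_digraph_no_loops
    (lam : List ℕ) (hlam : IsPartition lam) (q : ℕ)
    (T : IncTab lam q) (i : ℕ) (hi : 1 ≤ i) (j : ℕ) :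
    ¬ promEdge lam q i T j j :=
  increasing_promotion_digraph_no_loops_general lam q T i j
end

section
/- For any packed rectangular increasing tableau T of shape r × c on alphabet {1,…,q} for which the q-th power of K-promotion fixes T, every vertex of every promotion digraph prom_i(T) (1 ≤ i ≤ r−1) has indegree at least 1. -/
open Classical

/-!
Gromotion commutes with cyclic relabelling of the alphabet, so the `k`-th gromotion iterate of
`T` is `Pᵏ T` with every letter shifted by `k`, where `P` is K-promotion. The jeu de taquin slide
of a packed rectangular increasing tableau ends with a single bullet, in the corner; hence `P`
preserves such tableaux, `Pᵏ T` has its letter `q` only in the corner and its letter `1` in the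
origin. So the letter `v` lies only in the last row at time `v` and, as `P^q T = T`, in the
first row at time `v - 1 + q`. In the first gromotion step in between that brings `v` into the
first `i` rows, `v` slides from row `i + 1` up to row `i`: an edge into `v` of `prom_i(T)`.
-/

namespace KPromotion

/-- Cyclic relabelling `v ↦ v + k` of the alphabet `{1,…,q}`; `0` (a bullet) is fixed. -/
def cycShift (q k v : ℕ) : ℕ := if v = 0 then 0 else (v - 1 + k) % q + 1

section CycShift

variable {q k v w : ℕ}

@[simp]
lemma cycShift_zero : cycShift q k 0 = 0 := if_pos rfl

@[simp]
lemma cycShift_eq_zero_iff : cycShift q k v = 0 ↔ v = 0 := by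
  by_cases hv : v = 0 <;> simp [cycShift, hv]

lemma cycShift_one : cycShift q k 1 = k % q + 1 := by
  simp [cycShift]

lemma cycShift_cycShift (a b : ℕ) : cycShift q a (cycShift q b v) = cycShift q (a + b) v := by
  by_cases hv : v = 0
  · simp [hv]
  · simp [cycShift, hv, Nat.mod_add_mod, add_assoc, add_comm b a]

lemma cycShift_mod : cycShift q (k % q) v = cycShift q k v := by
  unfold cycShift
  split_ifs
  · rfl
  · rw [Nat.add_mod_mod]

lemma cycShift_shift_zero (hv : v ≤ q) : cycShift q 0 v = v := by
  unfold cycShift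
  split_ifs with h
  · exact h.symm
  · rw [Nat.add_zero, Nat.mod_eq_of_lt (by omega)]
    omega

lemma cycShift_le (hq : 1 ≤ q) : cycShift q k v ≤ q := by
  unfold cycShift
  split_ifs
  · omega
  · have := Nat.mod_lt (v - 1 + k) (show 0 < q by omega)
    omega

lemma cycShift_injOn (hv : v ≤ q) (hw : w ≤ q) (h : cycShift q k v = cycShift q k w) :
    v = w := by
  unfold cycShift at h
  split_ifs at h with h1 h2 h2 <;> try omega
  have h4 : (v - 1) % q = (w - 1) % q := Nat.ModEq.add_right_cancel' k (by unfold Nat.ModEq; omega)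
  rw [Nat.mod_eq_of_lt (by omega), Nat.mod_eq_of_lt (by omega)] at h4
  omega

lemma cyc_eq_cycShift {α : ℕ} (hα : α ≠ 0) (j : ℕ) : cyc q α j = cycShift q j α := by
  simp [cyc, cycShift, hα]

lemma cycShift_cyc {α : ℕ} (hα : α ≠ 0) (j : ℕ) :
    cycShift q k (cyc q α j) = cyc q (cycShift q k α) j := by
  have hα' : cycShift q k α ≠ 0 := by simp [cycShift, hα]
  rw [cyc_eq_cycShift hα, cyc_eq_cycShift hα', cycShift_cycShift, cycShift_cycShift, add_comm]

lemma cyc_le (hq : 1 ≤ q) (α j : ℕ) : cyc q α j ≤ q := by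
  have := Nat.mod_lt (α - 1 + j) (show 0 < q by omega)
  unfold cyc
  omega

end CycShift

section Substep

variable {lam : List ℕ} {w : ℕ} {g : Cell → ℕ} {x : Cell}

def Receives (lam : List ℕ) (g : Cell → ℕ) (w : ℕ) (x : Cell) : Prop :=
  isBullet lam g x ∧ (inC lam g w (x.1, x.2 + 1) ∨ inC lam g w (x.1 + 1, x.2))

lemma substep_of_inC (h : inC lam g w x) : substep lam w g x = 0 := if_pos h

lemma substep_of_receives (h₁ : ¬ inC lam g w x) (h₂ : Receives lam g w x) :
    substep lam w g x = w := by
  unfold substep; rw [if_neg h₁]; exact if_pos h₂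

lemma substep_of_not_receives (h₁ : ¬ inC lam g w x) (h₂ : ¬ Receives lam g w x) :
    substep lam w g x = g x := by
  unfold substep; rw [if_neg h₁]; exact if_neg h₂

lemma substep_cases (lam : List ℕ) (w : ℕ) (g : Cell → ℕ) (x : Cell) :
    (inC lam g w x ∧ substep lam w g x = 0) ∨
    (¬ inC lam g w x ∧ Receives lam g w x ∧ substep lam w g x = w) ∨
    (¬ inC lam g w x ∧ ¬ Receives lam g w x ∧ substep lam w g x = g x) := by
  by_cases h₁ : inC lam g w x
  · exact Or.inl ⟨h₁, substep_of_inC h₁⟩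
  · by_cases h₂ : Receives lam g w x
    · exact Or.inr (Or.inl ⟨h₁, h₂, substep_of_receives h₁ h₂⟩)
    · exact Or.inr (Or.inr ⟨h₁, h₂, substep_of_not_receives h₁ h₂⟩)

lemma not_inC_of_ne (hw : g x ≠ w) : ¬ inC lam g w x := fun h => hw h.2.1

lemma not_receives_of_ne_zero (h0 : g x ≠ 0) : ¬ Receives lam g w x := fun h => h0 h.1.2

lemma substep_of_ne (hw : g x ≠ w) (h0 : g x ≠ 0) : substep lam w g x = g x :=
  substep_of_not_receives (not_inC_of_ne hw) (not_receives_of_ne_zero h0)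

lemma substep_of_not_inShape (hx : ¬ inShape lam x) : substep lam w g x = g x :=
  substep_of_not_receives (fun h => hx h.1) (fun h => hx h.1.1)

lemma substep_eq_zero (h0 : substep lam w g x = 0) (hw : w ≠ 0) :
    inC lam g w x ∨ (g x = 0 ∧ ¬ Receives lam g w x) := by
  rcases substep_cases lam w g x with ⟨h, -⟩ | ⟨-, -, he⟩ | ⟨-, hR, he⟩
  · exact Or.inl h
  · exact absurd (he.symm.trans h0) hw
  · exact Or.inr ⟨he.symm.trans h0, hR⟩

lemma exists_bullet_of_inC (h : inC lam g w x) : ∃ p : Cell, isBullet lam g p ∧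
    p.1 ≤ x.1 ∧ p.2 ≤ x.2 ∧ p.1 + p.2 + 1 = x.1 + x.2 := by
  rcases h.2.2 with ⟨h₁, hb⟩ | ⟨h₁, hb⟩
  · exact ⟨(x.1, x.2 - 1), hb, le_rfl, by simp, by simp; omega⟩
  · exact ⟨(x.1 - 1, x.2), hb, by simp, le_rfl, by simp; omega⟩

end Substep

structure IsFilling (lam : List ℕ) (q : ℕ) (f : Cell → ℕ) : Prop where
  le : ∀ x, f x ≤ q
  zero_outside : ∀ x, ¬ inShape lam x → f x = 0

section Equivariance

variable {lam : List ℕ} {q k v α : ℕ} {F : Cell → ℕ}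

lemma isBullet_cycShift {x : Cell} : isBullet lam (cycShift q k ∘ F) x ↔ isBullet lam F x := by
  simp [isBullet]

lemma inC_cycShift (hF : ∀ y, F y ≤ q) (hv : v ≤ q) {x : Cell} :
    inC lam (cycShift q k ∘ F) (cycShift q k v) x ↔ inC lam F v x := by
  have hval : cycShift q k (F x) = cycShift q k v ↔ F x = v :=
    ⟨cycShift_injOn (hF x) hv, congrArg _⟩
  simp only [inC, isBullet_cycShift, Function.comp_apply, hval]

lemma substep_cycShift (hF : ∀ y, F y ≤ q) (hv : v ≤ q) :
    substep lam (cycShift q k v) (cycShift q k ∘ F) = cycShift q k ∘ substep lam v F := by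
  funext x
  simp only [substep, inC_cycShift hF hv, isBullet_cycShift, Function.comp_apply]
  split_ifs <;> simp

lemma substep_le (hF : ∀ y, F y ≤ q) (hv : v ≤ q) (x : Cell) : substep lam v F x ≤ q := by
  unfold substep
  split_ifs
  · omega
  · exact hv
  · exact hF x

lemma iterSub_le (hq : 1 ≤ q) (hF : ∀ y, F y ≤ q) (j : ℕ) (x : Cell) :
    iterSub lam q α F j x ≤ q := by
  induction j generalizing x with
  | zero =>
    simp only [iterSub]
    split_ifs
    · omega
    · exact hF x
  | succ j ih => exact substep_le ih (cyc_le hq _ _) x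

lemma iterSub_of_not_inShape (hF : ∀ y, ¬ inShape lam y → F y = 0) (j : ℕ) {x : Cell}
    (hx : ¬ inShape lam x) : iterSub lam q α F j x = 0 := by
  induction j with
  | zero =>
    simp only [iterSub]
    split_ifs
    · rfl
    · exact hF x hx
  | succ j ih => exact (substep_of_not_inShape hx).trans ih

lemma iterSub_cycShift (hα : 1 ≤ α) (hαq : α ≤ q) (hF : ∀ y, F y ≤ q) (j : ℕ) :
    iterSub lam q (cycShift q k α) (cycShift q k ∘ F) j = cycShift q k ∘ iterSub lam q α F j := by
  induction j with
  | zero =>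
    funext x
    have hval : cycShift q k (F x) = cycShift q k α ↔ F x = α :=
      ⟨cycShift_injOn (hF x) hαq, congrArg _⟩
    simp only [iterSub, Function.comp_apply, hval]
    split_ifs <;> simp
  | succ j ih =>
    simp only [iterSub]
    rw [ih, ← cycShift_cyc (by omega),
      substep_cycShift (iterSub_le (by omega) hF j) (cyc_le (by omega) _ _)]

lemma gromote_cycShift (hα : 1 ≤ α) (hαq : α ≤ q) (hF : ∀ y, F y ≤ q) :
    gromote lam q (cycShift q k α) (cycShift q k ∘ F) = cycShift q k ∘ gromote lam q α F := by
  funext x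
  simp only [gromote, iterSub_cycShift hα hαq hF, Function.comp_apply, cycShift_eq_zero_iff]
  split_ifs <;> rfl

lemma one_le_gromote_one {x : Cell} (hx : inShape lam x) : 1 ≤ gromote lam q 1 F x := by
  unfold gromote
  split_ifs with h
  · exact le_rfl
  · exact Nat.one_le_iff_ne_zero.2 fun h0 => h ⟨hx, h0⟩

lemma gromote_le (hq : 1 ≤ q) (hαq : α ≤ q) (hF : ∀ y, F y ≤ q) (x : Cell) :
    gromote lam q α F x ≤ q := by
  unfold gromote
  split_ifs
  · exact hαq
  · exact iterSub_le hq hF _ x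

lemma kpromote_eq_cycShift_gromote (hq : 1 ≤ q) (hF : IsFilling lam q F) :
    kpromote lam q F = cycShift q (q - 1) ∘ gromote lam q 1 F := by
  funext x
  by_cases hx : inShape lam x
  · have h1 := one_le_gromote_one (q := q) (F := F) hx
    have hle := gromote_le (lam := lam) hq hq hF.le x
    set g := gromote lam q 1 F x
    simp only [kpromote, hx, if_true, Function.comp_apply, cycShift]
    split_ifs with h h0 h0 <;> try omega
    · rw [h, Nat.sub_self, zero_add, Nat.mod_eq_of_lt (by omega)]
      omega
    · rw [show g - 1 + (q - 1) = g - 2 + q by omega, Nat.add_mod_right,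
        Nat.mod_eq_of_lt (by omega)]
      omega
  · simp [kpromote, hx, gromote, iterSub_of_not_inShape hF.zero_outside]

lemma isFilling_kpromote (hq : 1 ≤ q) (hF : IsFilling lam q F) :
    IsFilling lam q (kpromote lam q F) where
  le x := by
    rw [kpromote_eq_cycShift_gromote hq hF]
    exact cycShift_le hq
  zero_outside x hx := by simp [kpromote, hx]

lemma isFilling_iterate_kpromote (hq : 1 ≤ q) (hF : IsFilling lam q F) (k : ℕ) :
    IsFilling lam q ((kpromote lam q)^[k] F) := by
  induction k with
  | zero => exact hF
  | succ k ih => simpa only [Function.iterate_succ_apply'] using isFilling_kpromote hq ih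

lemma gromIter_eq (hq : 1 ≤ q) (hF : IsFilling lam q F) (k : ℕ) :
    gromIter lam q F k = cycShift q k ∘ (kpromote lam q)^[k] F := by
  induction k with
  | zero =>
    funext x
    exact (cycShift_shift_zero (hF.le x)).symm
  | succ k ih =>
    have hk := isFilling_iterate_kpromote hq hF k
    simp only [gromIter]
    rw [ih, ← cycShift_one, gromote_cycShift le_rfl hq hk.le, Function.iterate_succ_apply',
      kpromote_eq_cycShift_gromote hq hk]
    funext x
    simp only [Function.comp_apply, cycShift_cycShift]
    rw [show k + 1 + (q - 1) = k + q by omega, ← cycShift_mod (k := k + q), Nat.add_mod_right,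
      cycShift_mod]

lemma gromIter_mod (hq : 1 ≤ q) (hF : IsFilling lam q F)
    (hfix : (kpromote lam q)^[q] F = F) (k : ℕ) :
    gromIter lam q F (k % q) = gromIter lam q F k := by
  have hper : Function.IsPeriodicPt (kpromote lam q) q F := hfix
  rw [gromIter_eq hq hF, gromIter_eq hq hF, hper.iterate_mod_apply]
  funext x
  exact cycShift_mod

end Equivariance

abbrev rect (r c : ℕ) : List ℕ := List.replicate r c

lemma inShape_rect {r c : ℕ} {x : Cell} : inShape (rect r c) x ↔ x.1 < r ∧ x.2 < c := by
  by_cases h : x.1 < r <;> simp [inShape, h, List.getD_eq_getElem?_getD]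

lemma lt_of_lt_succ_of_lt {u : ℕ → ℕ} {n : ℕ} (h : ∀ m, m + 1 < n → u m < u (m + 1))
    {a b : ℕ} (hab : a < b) (hb : b < n) : u a < u b :=
  strictMonoOn_Iic_of_lt_succ (n := n - 1) (fun m hm => h m (by omega))
    (by simp; omega) (by simp; omega) hab

structure IsPackedFilling (r c q : ℕ) (f : Cell → ℕ) : Prop extends IsFilling (rect r c) q f where
  pos : ∀ x, inShape (rect r c) x → 1 ≤ f x
  strictMono : ∀ x y, inShape (rect r c) x → inShape (rect r c) y →
    x.1 ≤ y.1 → x.2 ≤ y.2 → x ≠ y → f x < f y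
  surj : ∀ v, 1 ≤ v → v ≤ q → ∃ x, inShape (rect r c) x ∧ f x = v

section Rectangle

variable {r c q : ℕ}

lemma IncTab.isPackedFilling (T : IncTab (rect r c) q) (hp : Packed (rect r c) q T) :
    IsPackedFilling r c q T.entry where
  le x := by
    by_cases hx : inShape (rect r c) x
    · exact T.entry_le x hx
    · simp [T.zero_outside x hx]
  zero_outside := T.zero_outside
  pos := T.entry_pos
  surj := hp
  strictMono := by
    have row : ∀ {a b b'}, a < r → b < b' → b' < c → T.entry (a, b) < T.entry (a, b') :=
      fun ha hb hb' => lt_of_lt_succ_of_lt (u := fun b => T.entry (_, b))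
        (fun m hm => T.row_strict _ m (inShape_rect.2 ⟨ha, hm⟩)) hb hb'
    have col : ∀ {a a' b}, a < a' → a' < r → b < c → T.entry (a, b) < T.entry (a', b) :=
      fun ha ha' hb => lt_of_lt_succ_of_lt (u := fun a => T.entry (a, _))
        (fun m hm => T.col_strict m _ (inShape_rect.2 ⟨hm, hb⟩)) ha ha'
    rintro ⟨a, b⟩ ⟨a', b'⟩ hx hy ha hb hne
    simp only [inShape_rect] at hx hy ha hb
    rcases ha.eq_or_lt with rfl | ha
    · exact row hx.1 (lt_of_le_of_ne hb fun h => hne (by rw [h])) hy.2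
    · calc T.entry (a, b) ≤ T.entry (a, b') := by
            rcases hb.eq_or_lt with rfl | hb
            · exact le_rfl
            · exact (row hx.1 hb hy.2).le
        _ < T.entry (a', b') := col ha hy.1 hy.2

lemma IsPackedFilling.apply_origin {f : Cell → ℕ} (hf : IsPackedFilling r c q f) (hq : 1 ≤ q)
    (hr : 1 ≤ r) (hc : 1 ≤ c) : f (0, 0) = 1 := by
  obtain ⟨x, hx, hx1⟩ := hf.surj 1 le_rfl hq
  have h0 : inShape (rect r c) (0, 0) := inShape_rect.2 ⟨hr, hc⟩
  by_contra hne
  have := hf.strictMono (0, 0) x h0 hx (Nat.zero_le _) (Nat.zero_le _)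
    (by rintro rfl; exact hne hx1)
  have := hf.pos _ h0
  omega

lemma IsPackedFilling.eq_corner_of_eq {f : Cell → ℕ} (hf : IsPackedFilling r c q f) {x : Cell}
    (hx : inShape (rect r c) x) (hxq : f x = q) : x = (r - 1, c - 1) := by
  have hx' := inShape_rect.1 hx
  have hcorner : inShape (rect r c) (r - 1, c - 1) := inShape_rect.2 ⟨by omega, by omega⟩
  by_contra hne
  have := hf.strictMono x _ hx hcorner (by simp; omega) (by simp; omega) hne
  have := hf.le (r - 1, c - 1)
  omega

end Rectangle

/-- The state `g` after the first `j` substeps of gromotion at stage `1` of a packed filling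
`f`: the letters `2, …, j + 1` have slid, and the bullets form an antichain separating the slid
letters (weakly north-west of a bullet) from the unslid ones (weakly south-east). -/
structure SlideInv (r c q j : ℕ) (f g : Cell → ℕ) : Prop where
  zero_outside : ∀ x, ¬ inShape (rect r c) x → g x = 0
  le : ∀ x, g x ≤ q
  ne_one : ∀ x, inShape (rect r c) x → g x ≠ 1
  eq_of_unslid : ∀ x, inShape (rect r c) x → j + 2 ≤ f x → g x = f x
  bullet_antichain : ∀ b b', inShape (rect r c) b → inShape (rect r c) b' → g b = 0 →
    g b' = 0 → b.1 ≤ b'.1 → b.2 ≤ b'.2 → b = b'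
  unslid_of_bullet_le : ∀ b x, inShape (rect r c) b → inShape (rect r c) x → g b = 0 →
    g x ≠ 0 → b.1 ≤ x.1 → b.2 ≤ x.2 → b ≠ x → j + 2 ≤ g x
  strictMono : ∀ x y, inShape (rect r c) x → inShape (rect r c) y → g x ≠ 0 → g y ≠ 0 →
    x.1 ≤ y.1 → x.2 ≤ y.2 → x ≠ y → g x < g y
  surj : ∀ w, 2 ≤ w → w ≤ j + 1 → ∃ x, inShape (rect r c) x ∧ g x = w
  exists_bullet : ∃ b, inShape (rect r c) b ∧ g b = 0
  slid_of_le_bullet : ∀ x b, inShape (rect r c) x → inShape (rect r c) b → g b = 0 →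
    g x ≠ 0 → x.1 ≤ b.1 → x.2 ≤ b.2 → x ≠ b → g x ≤ j + 1

namespace SlideInv

variable {r c q j : ℕ} {f g : Cell → ℕ}

lemma adj_of_bullet_le (hI : SlideInv r c q j f g) {b x : Cell} (hb : inShape (rect r c) b)
    (hx : inShape (rect r c) x) (hgb : g b = 0) (hgx : g x = j + 2) (h₁ : b.1 ≤ x.1)
    (h₂ : b.2 ≤ x.2) (hne : b ≠ x) :
    (x.1 = b.1 + 1 ∧ x.2 = b.2) ∨ (x.1 = b.1 ∧ x.2 = b.2 + 1) := by
  by_contra hadj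
  -- a cell strictly between `b` and `x` would carry a letter in `[j + 2, g x)`
  obtain ⟨y, hy₁, hy₂, hyx₁, hyx₂, hyb, hyx⟩ : ∃ y : Cell, b.1 ≤ y.1 ∧ b.2 ≤ y.2 ∧
      y.1 ≤ x.1 ∧ y.2 ≤ x.2 ∧ b ≠ y ∧ y ≠ x := by
    by_cases hb₁ : b.1 < x.1
    · refine ⟨(b.1 + 1, b.2), by simp, le_rfl, hb₁, h₂, by simp [Prod.ext_iff], fun h => ?_⟩
      exact hadj (Or.inl ⟨by rw [← h], by rw [← h]⟩)
    · have hb₂ : b.2 < x.2 := by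
        by_contra
        exact hne (Prod.ext (by omega) (by omega))
      refine ⟨(b.1, b.2 + 1), le_rfl, by simp, h₁, hb₂, by simp [Prod.ext_iff], fun h => ?_⟩
      exact hadj (Or.inr ⟨by rw [← h], by rw [← h]⟩)
  have hyS : inShape (rect r c) y := by
    have := inShape_rect.1 hx
    exact inShape_rect.2 ⟨by omega, by omega⟩
  by_cases hy0 : g y = 0
  · exact hyb (hI.bullet_antichain b y hb hyS hgb hy0 hy₁ hy₂)
  · have := hI.unslid_of_bullet_le b y hb hyS hgb hy0 hy₁ hy₂ hyb
    have := hI.strictMono y x hyS hx hy0 (by omega) hyx₁ hyx₂ hyx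
    omega

lemma add_three_le_of_bullet_le (hI : SlideInv r c q j f g) {b x : Cell}
    (hb : inShape (rect r c) b) (hx : inShape (rect r c) x) (hgb : g b = 0) (hgx : g x ≠ 0)
    (h₁ : b.1 ≤ x.1) (h₂ : b.2 ≤ x.2) (hne : b ≠ x) (hnC : ¬ inC (rect r c) g (j + 2) x) :
    j + 3 ≤ g x := by
  have hd := hI.unslid_of_bullet_le b x hb hx hgb hgx h₁ h₂ hne
  by_contra hlt
  have hgx2 : g x = j + 2 := by omega
  rcases hI.adj_of_bullet_le hb hx hgb hgx2 h₁ h₂ hne with ⟨e₁, e₂⟩ | ⟨e₁, e₂⟩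
  · have hb' : (x.1 - 1, x.2) = b := Prod.ext (by simp; omega) (by simp; omega)
    exact hnC ⟨hx, hgx2, Or.inr ⟨by omega, hb' ▸ ⟨hb, hgb⟩⟩⟩
  · have hb' : (x.1, x.2 - 1) = b := Prod.ext (by simp; omega) (by simp; omega)
    exact hnC ⟨hx, hgx2, Or.inl ⟨by omega, hb' ▸ ⟨hb, hgb⟩⟩⟩

lemma substep_ne_one (hI : SlideInv r c q j f g) {x : Cell} (hx : inShape (rect r c) x) :
    substep (rect r c) (j + 2) g x ≠ 1 := by
  rcases substep_cases (rect r c) (j + 2) g x with ⟨-, he⟩ | ⟨-, -, he⟩ | ⟨-, -, he⟩ <;> rw [he]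
  · omega
  · omega
  · exact hI.ne_one x hx

lemma substep_bullet_antichain (hI : SlideInv r c q j f g) {b b' : Cell} (hb : inShape (rect r c) b)
    (hb' : inShape (rect r c) b') (h0 : substep (rect r c) (j + 2) g b = 0)
    (h0' : substep (rect r c) (j + 2) g b' = 0) (h₁ : b.1 ≤ b'.1) (h₂ : b.2 ≤ b'.2) :
    b = b' := by
  rcases substep_eq_zero h0 (by omega) with hbC | ⟨hb0, hbR⟩ <;>
    rcases substep_eq_zero h0' (by omega) with hbC' | ⟨hb0', -⟩
  · by_contra hne
    have := hI.strictMono b b' hb hb' (by rw [hbC.2.1]; omega) (by rw [hbC'.2.1]; omega) h₁ h₂ hne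
    rw [hbC.2.1, hbC'.2.1] at this
    omega
  · obtain ⟨p, hp, hp₁, hp₂, hps⟩ := exists_bullet_of_inC hbC
    have := hI.bullet_antichain p b' hp.1 hb' hp.2 hb0' (by omega) (by omega)
    subst this
    omega
  · by_contra hne
    rcases hI.adj_of_bullet_le hb hb' hb0 hbC'.2.1 h₁ h₂ hne with ⟨e₁, e₂⟩ | ⟨e₁, e₂⟩
    · refine hbR ⟨⟨hb, hb0⟩, Or.inr ?_⟩
      rwa [show (b.1 + 1, b.2) = b' from Prod.ext e₁.symm e₂.symm]
    · refine hbR ⟨⟨hb, hb0⟩, Or.inl ?_⟩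
      rwa [show (b.1, b.2 + 1) = b' from Prod.ext e₁.symm e₂.symm]
  · exact hI.bullet_antichain b b' hb hb' hb0 hb0' h₁ h₂

lemma substep_unslid_of_bullet_le (hI : SlideInv r c q j f g) {b x : Cell}
    (hb : inShape (rect r c) b) (hx : inShape (rect r c) x)
    (h0 : substep (rect r c) (j + 2) g b = 0)
    (hx0 : substep (rect r c) (j + 2) g x ≠ 0) (h₁ : b.1 ≤ x.1) (h₂ : b.2 ≤ x.2) (hne : b ≠ x) :
    j + 3 ≤ substep (rect r c) (j + 2) g x := by
  rcases substep_cases (rect r c) (j + 2) g x with ⟨-, he⟩ | ⟨-, hxR, -⟩ | ⟨hnC, -, he⟩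
  · exact absurd he hx0
  · exfalso
    rcases substep_eq_zero h0 (by omega) with hbC | ⟨hb0, -⟩
    · obtain ⟨p, hp, hp₁, hp₂, hps⟩ := exists_bullet_of_inC hbC
      have := hI.bullet_antichain p x hp.1 hx hp.2 hxR.1.2 (by omega) (by omega)
      subst this
      omega
    · exact hne (hI.bullet_antichain b x hb hx hb0 hxR.1.2 h₁ h₂)
  · rw [he] at hx0 ⊢
    rcases substep_eq_zero h0 (by omega) with hbC | ⟨hb0, -⟩
    · obtain ⟨p, hp, hp₁, hp₂, hps⟩ := exists_bullet_of_inC hbC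
      have hpx : p ≠ x := by rintro rfl; exact hx0 hp.2
      exact hI.add_three_le_of_bullet_le hp.1 hx hp.2 hx0 (by omega) (by omega) hpx hnC
    · exact hI.add_three_le_of_bullet_le hb hx hb0 hx0 h₁ h₂ hne hnC

lemma substep_strictMono (hI : SlideInv r c q j f g) {x y : Cell} (hx : inShape (rect r c) x)
    (hy : inShape (rect r c) y) (hx0 : substep (rect r c) (j + 2) g x ≠ 0)
    (hy0 : substep (rect r c) (j + 2) g y ≠ 0)
    (h₁ : x.1 ≤ y.1) (h₂ : x.2 ≤ y.2) (hne : x ≠ y) :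
    substep (rect r c) (j + 2) g x < substep (rect r c) (j + 2) g y := by
  rcases substep_cases (rect r c) (j + 2) g x with ⟨-, hex⟩ | ⟨-, hxR, hex⟩ | ⟨-, -, hex⟩
  · exact absurd hex hx0
  · rcases substep_cases (rect r c) (j + 2) g y with ⟨-, hey⟩ | ⟨-, hyR, -⟩ | ⟨hnCy, -, hey⟩
    · exact absurd hey hy0
    · exact absurd (hI.bullet_antichain x y hx hy hxR.1.2 hyR.1.2 h₁ h₂) hne
    · rw [hey] at hy0 ⊢
      have := hI.add_three_le_of_bullet_le hx hy hxR.1.2 hy0 h₁ h₂ hne hnCy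
      omega
  · rw [hex] at hx0 ⊢
    rcases substep_cases (rect r c) (j + 2) g y with ⟨-, hey⟩ | ⟨-, hyR, hey⟩ | ⟨-, -, hey⟩
    · exact absurd hey hy0
    · have := hI.slid_of_le_bullet x y hx hy hyR.1.2 hx0 h₁ h₂ hne
      omega
    · rw [hey] at hy0 ⊢
      exact hI.strictMono x y hx hy hx0 hy0 h₁ h₂ hne

lemma substep_surj (hI : SlideInv r c q j f g) (hwq : j + 2 ≤ q) (hf : IsPackedFilling r c q f)
    {w : ℕ} (h2w : 2 ≤ w) (hw : w ≤ j + 2) :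
    ∃ x, inShape (rect r c) x ∧ substep (rect r c) (j + 2) g x = w := by
  rcases hw.lt_or_eq with hw | rfl
  · obtain ⟨x, hx, hgx⟩ := hI.surj w h2w (by omega)
    exact ⟨x, hx, by rw [substep_of_ne (by omega) (by omega), hgx]⟩
  obtain ⟨y, hy, hfy⟩ := hf.surj (j + 2) (by omega) hwq
  have hgy : g y = j + 2 := by rw [hI.eq_of_unslid y hy (by omega), hfy]
  by_cases hC : inC (rect r c) g (j + 2) y
  · -- the letter moves into the bullet next to `y`
    rcases hC.2.2 with ⟨h₁, hb⟩ | ⟨h₁, hb⟩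
    · refine ⟨(y.1, y.2 - 1), hb.1,
        substep_of_receives (not_inC_of_ne (by rw [hb.2]; omega)) ⟨hb, Or.inl ?_⟩⟩
      rwa [show (y.1, y.2 - 1 + 1) = y from Prod.ext rfl (by simp; omega)]
    · refine ⟨(y.1 - 1, y.2), hb.1,
        substep_of_receives (not_inC_of_ne (by rw [hb.2]; omega)) ⟨hb, Or.inr ?_⟩⟩
      rwa [show (y.1 - 1 + 1, y.2) = y from Prod.ext (by simp; omega) rfl]
  · exact ⟨y, hy, by rw [substep_of_not_receives hC (not_receives_of_ne_zero (by omega)), hgy]⟩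

lemma substep_exists_bullet (hI : SlideInv r c q j f g) :
    ∃ b, inShape (rect r c) b ∧ substep (rect r c) (j + 2) g b = 0 := by
  obtain ⟨b, hb, hb0⟩ := hI.exists_bullet
  by_cases hR : inC (rect r c) g (j + 2) (b.1, b.2 + 1) ∨ inC (rect r c) g (j + 2) (b.1 + 1, b.2)
  · rcases hR with h | h
    · exact ⟨_, h.1, substep_of_inC h⟩
    · exact ⟨_, h.1, substep_of_inC h⟩
  · exact ⟨b, hb, by rw [substep_of_not_receives (not_inC_of_ne (by omega)) (fun h => hR h.2), hb0]⟩

lemma substep_slid_of_le_bullet (hI : SlideInv r c q j f g) {x b : Cell} (hx : inShape (rect r c) x)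
    (hb : inShape (rect r c) b) (hb0 : substep (rect r c) (j + 2) g b = 0)
    (hx0 : substep (rect r c) (j + 2) g x ≠ 0) (h₁ : x.1 ≤ b.1) (h₂ : x.2 ≤ b.2) (hne : x ≠ b) :
    substep (rect r c) (j + 2) g x ≤ j + 2 := by
  rcases substep_cases (rect r c) (j + 2) g x with ⟨-, hex⟩ | ⟨-, -, hex⟩ | ⟨-, -, hex⟩
  · exact absurd hex hx0
  · rw [hex]
  · rw [hex] at hx0 ⊢
    rcases substep_eq_zero hb0 (by omega) with hbC | ⟨hb0', -⟩
    · have := hI.strictMono x b hx hb hx0 (by rw [hbC.2.1]; omega) h₁ h₂ hne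
      rw [hbC.2.1] at this
      omega
    · have := hI.slid_of_le_bullet x b hx hb hb0' hx0 h₁ h₂ hne
      omega

lemma step (hI : SlideInv r c q j f g) (hwq : j + 2 ≤ q) (hf : IsPackedFilling r c q f) :
    SlideInv r c q (j + 1) f (substep (rect r c) (j + 2) g) where
  zero_outside x hx := (substep_of_not_inShape hx).trans (hI.zero_outside x hx)
  le := KPromotion.substep_le hI.le hwq
  ne_one _ := hI.substep_ne_one
  eq_of_unslid x hx hfx := by
    have := hI.eq_of_unslid x hx (by omega)
    rw [substep_of_ne (by omega) (by omega), this]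
  bullet_antichain _ _ := hI.substep_bullet_antichain
  unslid_of_bullet_le _ _ := hI.substep_unslid_of_bullet_le
  strictMono _ _ := hI.substep_strictMono
  surj _ := hI.substep_surj hwq hf
  exists_bullet := hI.substep_exists_bullet
  slid_of_le_bullet _ _ := hI.substep_slid_of_le_bullet

lemma eq_corner_of_bullet (hI : SlideInv r c q (q - 1) f g) {b : Cell}
    (hb : inShape (rect r c) b) (h0 : g b = 0) : b = (r - 1, c - 1) := by
  have hb' := inShape_rect.1 hb
  by_contra hne
  have hcorner : inShape (rect r c) (r - 1, c - 1) := inShape_rect.2 ⟨by omega, by omega⟩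
  by_cases hg0 : g (r - 1, c - 1) = 0
  · exact hne (hI.bullet_antichain b _ hb hcorner h0 hg0 (by simp; omega) (by simp; omega))
  · -- an unslid letter would exceed `q`
    have := hI.unslid_of_bullet_le b _ hb hcorner h0 hg0 (by simp; omega) (by simp; omega) hne
    have := hI.le (r - 1, c - 1)
    omega

lemma apply_corner (hI : SlideInv r c q (q - 1) f g) : g (r - 1, c - 1) = 0 := by
  obtain ⟨b, hb, hb0⟩ := hI.exists_bullet
  rwa [← hI.eq_corner_of_bullet hb hb0]

end SlideInv

section Promotion

variable {r c q : ℕ} {f : Cell → ℕ}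

lemma slideInv_zero (hf : IsPackedFilling r c q f) (hq : 1 ≤ q) (hr : 1 ≤ r) (hc : 1 ≤ c) :
    SlideInv r c q 0 f (iterSub (rect r c) q 1 f 0) := by
  have h00 : inShape (rect r c) (0, 0) := inShape_rect.2 ⟨hr, hc⟩
  have hf00 := hf.apply_origin hq hr hc
  have hg : ∀ x, iterSub (rect r c) q 1 f 0 x = if x = (0, 0) then 0 else f x := by
    intro x
    by_cases h : x = (0, 0) <;> simp [iterSub, h, hf00]
  have h2 : ∀ x, inShape (rect r c) x → x ≠ (0, 0) → 2 ≤ f x := fun x hx hne => by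
    have := hf.strictMono _ x h00 hx (Nat.zero_le _) (Nat.zero_le _) (Ne.symm hne)
    omega
  have hbullet : ∀ x, inShape (rect r c) x → iterSub (rect r c) q 1 f 0 x = 0 → x = (0, 0) := by
    intro x hx h0
    by_contra hne
    have := h2 x hx hne
    simp [hg, hne] at h0
    omega
  exact
    { zero_outside := fun x hx => by
        rw [hg]; split_ifs
        · rfl
        · exact hf.zero_outside x hx
      le := fun x => by
        rw [hg]; split_ifs
        · exact Nat.zero_le q
        · exact hf.le x
      ne_one := fun x hx => by
        rw [hg]; split_ifs with h
        · omega
        · have := h2 x hx h; omega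
      eq_of_unslid := fun x _ hx2 => by
        rw [hg, if_neg (by rintro rfl; omega)]
      bullet_antichain := fun b b' hb hb' h0 h0' _ _ => by
        rw [hbullet b hb h0, hbullet b' hb' h0']
      unslid_of_bullet_le := fun b x _ hx _ hx0 _ _ _ => by
        have hne : x ≠ (0, 0) := by rintro rfl; simp [hg] at hx0
        rw [hg, if_neg hne]
        exact h2 x hx hne
      strictMono := fun x y hx hy hx0 hy0 h₁ h₂ hne => by
        have hx' : x ≠ (0, 0) := by rintro rfl; simp [hg] at hx0
        have hy' : y ≠ (0, 0) := by rintro rfl; simp [hg] at hy0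
        rw [hg, hg, if_neg hx', if_neg hy']
        exact hf.strictMono x y hx hy h₁ h₂ hne
      surj := fun w h2w hw => by omega
      exists_bullet := ⟨(0, 0), h00, by simp [hg]⟩
      slid_of_le_bullet := fun x b _ hb h0 _ h₁ h₂ hne => by
        have := hbullet b hb h0
        subst this
        exact absurd (Prod.ext (by simp at h₁; omega) (by simp at h₂; omega)) hne }

lemma slideInv_iterSub (hf : IsPackedFilling r c q f) (hq : 1 ≤ q) (hr : 1 ≤ r) (hc : 1 ≤ c)
    {j : ℕ} (hj : j ≤ q - 1) : SlideInv r c q j f (iterSub (rect r c) q 1 f j) := by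
  induction j with
  | zero => exact slideInv_zero hf hq hr hc
  | succ j ih =>
    have hcyc : cyc q 1 (j + 1) = j + 2 := by
      rw [cyc, Nat.mod_eq_of_lt (by omega)]
      omega
    simp only [iterSub, hcyc]
    exact (ih (by omega)).step (by omega) hf

lemma kpromote_apply_of_isPackedFilling (hf : IsPackedFilling r c q f) (hq : 1 ≤ q)
    (hr : 1 ≤ r) (hc : 1 ≤ c) {x : Cell} (hx : inShape (rect r c) x) :
    kpromote (rect r c) q f x =
      if x = (r - 1, c - 1) then q else iterSub (rect r c) q 1 f (q - 1) x - 1 := by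
  have hI := slideInv_iterSub hf hq hr hc le_rfl
  have hbullet : iterSub (rect r c) q 1 f (q - 1) x = 0 ↔ x = (r - 1, c - 1) := by
    refine ⟨hI.eq_corner_of_bullet hx, ?_⟩
    rintro rfl
    exact hI.apply_corner
  have hne1 := hI.ne_one x hx
  simp only [kpromote, gromote, hx, true_and, if_true]
  by_cases hcorner : x = (r - 1, c - 1)
  · rw [if_pos (hbullet.2 hcorner), if_pos rfl, if_pos hcorner]
  · rw [if_neg (mt hbullet.1 hcorner), if_neg hne1, if_neg hcorner]

lemma isPackedFilling_kpromote (hf : IsPackedFilling r c q f) (hq : 1 ≤ q) (hr : 1 ≤ r)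
    (hc : 1 ≤ c) : IsPackedFilling r c q (kpromote (rect r c) q f) := by
  have hI := slideInv_iterSub hf hq hr hc le_rfl
  have hk := fun {x} => kpromote_apply_of_isPackedFilling hf hq hr hc (x := x)
  set g := iterSub (rect r c) q 1 f (q - 1)
  have hcorner : inShape (rect r c) (r - 1, c - 1) := inShape_rect.2 ⟨by omega, by omega⟩
  have hg : ∀ x, inShape (rect r c) x → x ≠ (r - 1, c - 1) → 2 ≤ g x := fun x hx hne => by
    have h0 : g x ≠ 0 := fun h0 => hne (hI.eq_corner_of_bullet hx h0)
    have := hI.ne_one x hx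
    omega
  refine
    { toIsFilling := isFilling_kpromote hq hf.toIsFilling
      pos := fun x hx => ?_
      strictMono := fun x y hx hy h₁ h₂ hne => ?_
      surj := fun v hv hvq => ?_ }
  · rw [hk hx]
    split_ifs with h
    · exact hq
    · have := hg x hx h; omega
  · have hx' : x ≠ (r - 1, c - 1) := by
      rintro rfl
      have := inShape_rect.1 hy
      exact hne (Prod.ext (by simp at h₁ ⊢; omega) (by simp at h₂ ⊢; omega))
    have := hg x hx hx'
    rw [hk hx, hk hy, if_neg hx']
    split_ifs with hy'
    · have := hI.le x; omega
    · have := hI.strictMono x y hx hy (by omega) (by have := hg y hy hy'; omega) h₁ h₂ hne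
      omega
  · rcases (show v ≤ q from hvq).lt_or_eq with hv' | rfl
    · obtain ⟨y, hy, hgy⟩ := hI.surj (v + 1) (by omega) (by omega)
      have hy' : y ≠ (r - 1, c - 1) := by
        rintro rfl
        rw [hI.apply_corner] at hgy
        omega
      exact ⟨y, hy, by rw [hk hy, if_neg hy', hgy]; rfl⟩
    · exact ⟨_, hcorner, by rw [hk hcorner, if_pos rfl]⟩

lemma isPackedFilling_iterate_kpromote (hf : IsPackedFilling r c q f) (hq : 1 ≤ q)
    (hr : 1 ≤ r) (hc : 1 ≤ c) (k : ℕ) :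
    IsPackedFilling r c q ((kpromote (rect r c) q)^[k] f) := by
  induction k with
  | zero => exact hf
  | succ k ih =>
    rw [Function.iterate_succ_apply']
    exact isPackedFilling_kpromote ih hq hr hc

end Promotion

/-- The letter `v` occurs in the first `m` rows of `g`, i.e. in rows `1, …, m` in the
1-indexed convention of `moveAt`. -/
def OccursInFirstRows (lam : List ℕ) (g : Cell → ℕ) (m v : ℕ) : Prop :=
  ∃ x : Cell, inShape lam x ∧ x.1 < m ∧ g x = v

section Tracking

variable {lam : List ℕ} {q m v : ℕ} {g g' : Cell → ℕ}

lemma occursInFirstRows_congr (h : ∀ x, g' x = v ↔ g x = v) :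
    OccursInFirstRows lam g' m v ↔ OccursInFirstRows lam g m v := by
  simp only [OccursInFirstRows, h]

lemma substep_eq_iff_of_ne {w : ℕ} (hv : v ≠ 0) (hw : w ≠ v) (x : Cell) :
    substep lam w g x = v ↔ g x = v := by
  rcases substep_cases lam w g x with ⟨hC, he⟩ | ⟨-, hR, he⟩ | ⟨-, -, he⟩ <;> rw [he]
  · exact ⟨fun h => absurd h.symm hv, fun h => absurd (h.symm.trans hC.2.1) (Ne.symm hw)⟩
  · exact ⟨fun h => absurd h hw, fun h => absurd (h.symm.trans hR.1.2) hv⟩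

lemma moveAt_of_occursInFirstRows_substep (hv : v ≠ 0) (h : ¬ OccursInFirstRows lam g m v)
    (h' : OccursInFirstRows lam (substep lam v g) m v) : moveAt lam g v m := by
  obtain ⟨x, hx, hxm, hxv⟩ := h'
  rcases substep_cases lam v g x with ⟨-, he⟩ | ⟨-, hR, -⟩ | ⟨-, -, he⟩
  · exact absurd (he.symm.trans hxv) (Ne.symm hv)
  · -- `x` received `v` from its right or lower neighbour; only the latter can be below row `m`
    rcases hR.2 with hright | hbelow
    · exact absurd ⟨_, hright.1, hxm, hright.2.1⟩ h
    · have hxm' : x.1 + 1 = m := by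
        by_contra
        exact h ⟨_, hbelow.1, by simp; omega, hbelow.2.1⟩
      exact ⟨x, hR.1, hxm', hbelow⟩
  · exact absurd ⟨x, hx, hxm, he.symm.trans hxv⟩ h

lemma exists_lt_not_and_succ {p : ℕ → Prop} {n : ℕ} (h₀ : ¬ p 0) (hn : p n) :
    ∃ k < n, ¬ p k ∧ p (k + 1) := by
  obtain ⟨k, hk, hk'⟩ := Nat.exists_not_and_succ_of_not_zero_of_exists
    (p := fun k => k ≤ n ∧ p k) (fun h => h₀ h.2) ⟨n, le_rfl, hn⟩
  exact ⟨k, hk'.1, fun h => hk ⟨by omega, h⟩, hk'.2⟩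

lemma exists_moveAt_of_occursInFirstRows_gromote {α : ℕ} (hv : v ≠ 0) (hα : α ≠ v)
    (h : ¬ OccursInFirstRows lam g m v) (h' : OccursInFirstRows lam (gromote lam q α g) m v) :
    ∃ j, j + 1 ≤ q - 1 ∧ cyc q α (j + 1) = v ∧ moveAt lam (iterSub lam q α g j) v m := by
  have hstart : ¬ OccursInFirstRows lam (iterSub lam q α g 0) m v := by
    refine mt (occursInFirstRows_congr fun x => ?_).1 h
    simp only [iterSub]
    split_ifs with hx
    · exact ⟨fun h => absurd h.symm hv, fun h => absurd (h.symm.trans hx.2) (Ne.symm hα)⟩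
    · rfl
  have hend : OccursInFirstRows lam (iterSub lam q α g (q - 1)) m v := by
    refine (occursInFirstRows_congr fun x => ?_).1 h'
    simp only [gromote]
    split_ifs with hx
    · exact ⟨fun h => absurd h hα, fun h => absurd (h.symm.trans hx.2) hv⟩
    · rfl
  obtain ⟨j, hj, hnot, hocc⟩ := exists_lt_not_and_succ
    (p := fun j => OccursInFirstRows lam (iterSub lam q α g j) m v) hstart hend
  simp only [iterSub] at hocc
  by_cases hcyc : cyc q α (j + 1) = v
  · rw [hcyc] at hocc
    exact ⟨j, hj, hcyc, moveAt_of_occursInFirstRows_substep hv hnot hocc⟩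
  · exact absurd ((occursInFirstRows_congr (substep_eq_iff_of_ne hv hcyc)).1 hocc) hnot

end Tracking

section LetterPositions

variable {r c q v : ℕ} {f : Cell → ℕ}

lemma eq_corner_of_gromIter_apply_eq_self (hf : IsPackedFilling r c q f) (hr : 1 ≤ r)
    (hc : 1 ≤ c) (hv : 1 ≤ v) (hvq : v ≤ q) {x : Cell} (hx : inShape (rect r c) x)
    (h : gromIter (rect r c) q f v x = v) : x = (r - 1, c - 1) := by
  have hq : 1 ≤ q := hv.trans hvq
  have hP := isPackedFilling_iterate_kpromote hf hq hr hc v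
  refine hP.eq_corner_of_eq hx (cycShift_injOn (k := v) (hP.le x) le_rfl ?_)
  rw [gromIter_eq hq hf.toIsFilling, Function.comp_apply] at h
  rw [h, cycShift, if_neg (by omega), show q - 1 + v = v - 1 + q by omega, Nat.add_mod_right,
    Nat.mod_eq_of_lt (by omega)]
  omega

lemma gromIter_pred_apply_origin (hf : IsPackedFilling r c q f) (hr : 1 ≤ r) (hc : 1 ≤ c)
    (hv : 1 ≤ v) (hvq : v ≤ q) : gromIter (rect r c) q f (v - 1) (0, 0) = v := by
  have hq : 1 ≤ q := hv.trans hvq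
  rw [gromIter_eq hq hf.toIsFilling, Function.comp_apply,
    (isPackedFilling_iterate_kpromote hf hq hr hc _).apply_origin hq hr hc, cycShift_one,
    Nat.mod_eq_of_lt (by omega)]
  omega

end LetterPositions

end KPromotion

open KPromotion

/-- if the `q`-th power of K-promotion fixes a packed rectangular
increasing tableau `T`, then every vertex of every `prom_i(T)` (`1 ≤ i ≤ r - 1`) has
indegree at least `1`. -/
theorem indegree_positive_of_small_order
    (r c q : ℕ) (T : IncTab (List.replicate r c) q)
    (hp : Packed (List.replicate r c) q T)
    (hfix : (kpromote (List.replicate r c) q)^[q] T.entry = T.entry) :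
    ∀ i, 1 ≤ i → i ≤ r - 1 → ∀ v, 1 ≤ v → v ≤ q →
      ∃ α, promEdge (List.replicate r c) q i T α v := by
  intro i hi hir v hv hvq
  have hq : 1 ≤ q := hv.trans hvq
  have hf := T.isPackedFilling hp
  obtain ⟨x₀, hx₀, -⟩ := hp 1 le_rfl hq
  have hc : 1 ≤ c := by have := inShape_rect.1 hx₀; omega
  have hr : 1 ≤ r := by omega
  have hstart : ¬ OccursInFirstRows (rect r c) (gromIter (rect r c) q T.entry (v + 0)) i v := by
    rintro ⟨x, hx, hxi, hxv⟩
    have := eq_corner_of_gromIter_apply_eq_self hf hr hc hv hvq hx hxv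
    subst this
    omega
  have hend : OccursInFirstRows (rect r c) (gromIter (rect r c) q T.entry (v + (q - 1))) i v := by
    refine ⟨(0, 0), inShape_rect.2 ⟨hr, hc⟩, hi, ?_⟩
    rw [← gromIter_mod hq hf.toIsFilling hfix, show (v + (q - 1)) % q = v - 1 by
      rw [show v + (q - 1) = v - 1 + q by omega, Nat.add_mod_right, Nat.mod_eq_of_lt (by omega)]]
    exact gromIter_pred_apply_origin hf hr hc hv hvq
  obtain ⟨k, hk, hbefore, hafter⟩ := exists_lt_not_and_succ
    (p := fun k => OccursInFirstRows (rect r c) (gromIter (rect r c) q T.entry (v + k)) i v)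
    hstart hend
  have hα : (v + k) % q + 1 ≠ v := by
    rcases Nat.lt_or_ge (v + k) q with h | h
    · rw [Nat.mod_eq_of_lt h]; omega
    · rw [Nat.mod_eq_sub_mod h, Nat.mod_eq_of_lt (by omega)]; omega
  obtain ⟨j, hj, hcyc, hmove⟩ :=
    exists_moveAt_of_occursInFirstRows_gromote (by omega) hα hbefore hafter
  refine ⟨(v + k) % q + 1, by omega, Nat.mod_lt _ (by omega), j, hj, hcyc, ?_⟩
  rwa [Nat.add_sub_cancel, gromIter_mod hq hf.toIsFilling hfix]
end
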